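/- arXiv:1602.02424 — 8 statements merged into one kernel-verified Lean document; each statement's English description precedes it below -/
import Mathlib

section
/- Let A → U → S and A → U' → S be two extensions of a semilattice of groups A by an inverse semigroup S, with monomorphisms i : A → U, i' : A → U' and idempotent-separating epimorphisms j : U → S, j' : U' → S satisfying i(A) = j⁻¹(E(S)) and i'(A) = j'⁻¹(E(S)). If μ : U → U' is a homomorphism with μ ∘ i = i' and j' ∘ μ = j, then μ is an isomorphism. -/
/-- An inverse semigroup structure: `iv` assigns to each element its unique
(generalized) inverse. -/
structure InvSemi (S : Type*) [Semigroup S] (iv : S → S) : Prop where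
  rr : ∀ s, s * iv s * s = s
  ri : ∀ s, iv s * s * iv s = iv s
  uniq : ∀ s t, s * t * s = s → t * s * t = t → t = iv s

private lemma hom_iv {U V : Type*} [Semigroup U] [Semigroup V]
    {ivU : U → U} {ivV : V → V} (hU : InvSemi U ivU) (hV : InvSemi V ivV)
    (f : U →ₙ* V) (u : U) : f (ivU u) = ivV (f u) := by
  apply hV.uniq
  · rw [← map_mul, ← map_mul, hU.rr]
  · rw [← map_mul, ← map_mul, hU.ri]

private lemma idem_ri {U : Type*} [Semigroup U] {ivU : U → U} (hU : InvSemi U ivU)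
    (u : U) : IsIdempotentElem (u * ivU u) := by
  show (u * ivU u) * (u * ivU u) = u * ivU u
  rw [← mul_assoc, hU.rr]

private lemma idem_ir {U : Type*} [Semigroup U] {ivU : U → U} (hU : InvSemi U ivU)
    (u : U) : IsIdempotentElem (ivU u * u) := by
  show (ivU u * u) * (ivU u * u) = ivU u * u
  rw [mul_assoc, ← mul_assoc u, hU.rr]

/-- If `μ` is a homomorphism between two extensions of a semilattice of groups
`A` by an inverse semigroup `S` commuting with the structure maps, then `μ` is
an isomorphism. -/
theorem stmt8 {A U U' S : Type*} [Semigroup A] [Semigroup U] [Semigroup U']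
    [Semigroup S]
    (ivA : A → A) (ivU : U → U) (ivU' : U' → U') (ivS : S → S)
    (hA : InvSemi A ivA) (hCl : ∀ a : A, a * ivA a = ivA a * a)
    (hU : InvSemi U ivU) (hU' : InvSemi U' ivU') (hS : InvSemi S ivS)
    (i : A →ₙ* U) (i' : A →ₙ* U') (j : U →ₙ* S) (j' : U' →ₙ* S)
    (hi : Function.Injective i) (hi' : Function.Injective i')
    (hj : Function.Surjective j) (hj' : Function.Surjective j')
    (hjsep : ∀ e f : U, IsIdempotentElem e → IsIdempotentElem f →
      j e = j f → e = f)
    (hj'sep : ∀ e f : U', IsIdempotentElem e → IsIdempotentElem f →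
      j' e = j' f → e = f)
    (hrange : Set.range i = {u : U | IsIdempotentElem (j u)})
    (hrange' : Set.range i' = {u : U' | IsIdempotentElem (j' u)})
    (μ : U →ₙ* U') (hμi : ∀ a : A, μ (i a) = i' a)
    (hμj : ∀ u : U, j' (μ u) = j u) :
    Function.Bijective μ := by
  have key : ∀ x y : U, IsIdempotentElem (j x) → IsIdempotentElem (j y) →
      μ x = μ y → x = y := by
    intro x y hx hy hxy
    obtain ⟨a, ha⟩ : x ∈ Set.range i := by rw [hrange]; exact hx
    obtain ⟨b, hb⟩ : y ∈ Set.range i := by rw [hrange]; exact hy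
    rw [← ha, ← hb]
    have : i' a = i' b := by rw [← hμi, ← hμi, ha, hb, hxy]
    rw [hi' this]
  constructor
  · intro u v h
    have hj_uv : j u = j v := by rw [← hμj, ← hμj, h]
    have idem1 : IsIdempotentElem (j (ivU u * u)) := by
      rw [map_mul, hom_iv hU hS]
      exact idem_ir hS (j u)
    have idem2 : IsIdempotentElem (j (ivU u * v)) := by
      rw [map_mul, hom_iv hU hS, ← hj_uv]
      exact idem_ir hS (j u)
    have h2 : ivU u * v = ivU u * u := key _ _ idem2 idem1 (by rw [map_mul, map_mul, h])
    have h3 : u * ivU u = v * ivU v := by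
      apply hjsep _ _ (idem_ri hU u) (idem_ri hU v)
      rw [map_mul, map_mul, hom_iv hU hS, hom_iv hU hS, hj_uv]
    calc u = u * ivU u * u := (hU.rr u).symm
      _ = u * (ivU u * u) := by rw [mul_assoc]
      _ = u * (ivU u * v) := by rw [h2]
      _ = u * ivU u * v := by rw [mul_assoc]
      _ = v * ivU v * v := by rw [h3]
      _ = v := hU.rr v
  · intro u'
    obtain ⟨u, hu⟩ := hj (j' u')
    have h1 : j' (μ u) = j' u' := by rw [hμj, hu]
    have idem : IsIdempotentElem (j' (u' * ivU' (μ u))) := by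
      rw [map_mul, hom_iv hU' hS, h1]
      exact idem_ri hS (j' u')
    obtain ⟨a, ha⟩ : u' * ivU' (μ u) ∈ Set.range i' := by rw [hrange']; exact idem
    refine ⟨i a * u, ?_⟩
    have h4 : ivU' (μ u) * μ u = ivU' u' * u' := by
      apply hj'sep _ _ (idem_ir hU' (μ u)) (idem_ir hU' u')
      rw [map_mul, map_mul, hom_iv hU' hS, hom_iv hU' hS, h1]
    calc μ (i a * u) = i' a * μ u := by rw [map_mul, hμi]
      _ = u' * ivU' (μ u) * μ u := by rw [ha]
      _ = u' * (ivU' (μ u) * μ u) := by rw [mul_assoc]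
      _ = u' * (ivU' u' * u') := by rw [h4]
      _ = u' := by rw [← mul_assoc, hU'.rr]
end

section
/- Let A → U → S be an extension of a semilattice of groups A by an inverse semigroup S, with monomorphism i and idempotent-separating epimorphism j, and let ρ : S → U be a transversal (j ∘ ρ = id_S). Then for every u ∈ U there is a unique pair (a, s) with a ∈ A, s ∈ S such that u = i(a)ρ(s) and i(aa⁻¹) = ρ(s)ρ(s)⁻¹. -/
namespace InvSemi

variable {M N : Type*} [Semigroup M] [Semigroup N] {ivM : M → M} {ivN : N → N}

theorem inv_idem (h : InvSemi M ivM) {e : M} (he : IsIdempotentElem e) :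
    ivM e = e :=
  (h.uniq e e (by rw [he, he]) (by rw [he, he])).symm

theorem idem_mul_inv (h : InvSemi M ivM) (s : M) : IsIdempotentElem (s * ivM s) := by
  show s * ivM s * (s * ivM s) = s * ivM s
  rw [← mul_assoc, h.rr]

theorem idem_inv_mul (h : InvSemi M ivM) (s : M) : IsIdempotentElem (ivM s * s) := by
  show ivM s * s * (ivM s * s) = ivM s * s
  rw [← mul_assoc, h.ri]

theorem map_inv (hM : InvSemi M ivM) (hN : InvSemi N ivN) (f : M →ₙ* N) (s : M) :
    f (ivM s) = ivN (f s) := by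
  apply hN.uniq
  · rw [← map_mul, ← map_mul, hM.rr]
  · rw [← map_mul, ← map_mul, hM.ri]

end InvSemi

/-- Given an extension `A → U → S` of a semilattice of groups `A` by an inverse
semigroup `S` and a transversal `ρ` of `j`, every `u ∈ U` is uniquely `i(a)ρ(s)`
with `i(aa⁻¹) = ρ(s)ρ(s)⁻¹`. -/
theorem stmt9 {A U S : Type*} [Semigroup A] [Semigroup U] [Semigroup S]
    (ivA : A → A) (ivU : U → U) (ivS : S → S)
    (hA : InvSemi A ivA) (hCl : ∀ a : A, a * ivA a = ivA a * a)
    (hU : InvSemi U ivU) (hS : InvSemi S ivS)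
    (i : A →ₙ* U) (j : U →ₙ* S)
    (hi : Function.Injective i) (hj : Function.Surjective j)
    (hjsep : ∀ e f : U, IsIdempotentElem e → IsIdempotentElem f →
      j e = j f → e = f)
    (hrange : Set.range i = {u : U | IsIdempotentElem (j u)})
    (ρ : S → U) (hρ : ∀ s, j (ρ s) = s) :
    ∀ u : U, ∃! p : A × S,
      u = i p.1 * ρ p.2 ∧ i (p.1 * ivA p.1) = ρ p.2 * ivU (ρ p.2) := by
  intro u
  have rr2 : ∀ x z : U, x * (ivU x * (x * z)) = x * z := fun x z => by
    rw [← mul_assoc, ← mul_assoc, hU.rr]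
  have K1 : ivU (ρ (j u)) * ρ (j u) = ivU u * u := by
    apply hjsep _ _ (hU.idem_inv_mul _) (hU.idem_inv_mul _)
    rw [map_mul, map_mul, hU.map_inv hS j, hU.map_inv hS j, hρ]
  have K1' : ∀ z : U, ivU (ρ (j u)) * (ρ (j u) * z) = ivU u * (u * z) := fun z => by
    rw [← mul_assoc, K1, mul_assoc]
  have K2 : ρ (j u) * ivU (ρ (j u)) = u * ivU u := by
    apply hjsep _ _ (hU.idem_mul_inv _) (hU.idem_mul_inv _)
    rw [map_mul, map_mul, hU.map_inv hS j, hU.map_inv hS j, hρ]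
  have hmem : u * ivU (ρ (j u)) ∈ Set.range i := by
    rw [hrange]
    show IsIdempotentElem (j (u * ivU (ρ (j u))))
    rw [map_mul, hU.map_inv hS j, hρ]
    exact hS.idem_mul_inv _
  obtain ⟨a, ha⟩ := hmem
  have hiv : ivU (u * ivU (ρ (j u))) = ρ (j u) * ivU u := by
    refine (hU.uniq _ _ ?_ ?_).symm
    · simp only [mul_assoc]
      rw [K1']
      simp only [rr2]
    · simp only [mul_assoc]
      rw [← K1']
      simp only [rr2]
  have e1 : i a * ρ (j u) = u := by
    rw [ha, mul_assoc, K1, ← mul_assoc, hU.rr]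
  have e2 : i (a * ivA a) = ρ (j u) * ivU (ρ (j u)) := by
    rw [map_mul, hA.map_inv hU i, ha, hiv, K2]
    simp only [mul_assoc]
    rw [K1', rr2]
  refine ⟨(a, j u), ⟨e1.symm, e2⟩, ?_⟩
  rintro ⟨b, t⟩ ⟨hb1, hb2⟩
  dsimp only at hb1 hb2
  have hf : IsIdempotentElem (j (i b)) := by
    have hm : i b ∈ Set.range i := ⟨b, rfl⟩
    rwa [hrange] at hm
  have hb2' : i b * ivU (i b) = ρ t * ivU (ρ t) := by
    rw [← hb2, map_mul, hA.map_inv hU i]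
  have h3 : j (i b) * ivS (j (i b)) = t * ivS t := by
    have h := congrArg j hb2'
    rwa [map_mul, map_mul, hU.map_inv hS j, hU.map_inv hS j, hρ] at h
  have h4 : j (i b) = t * ivS t := by
    rw [← h3, hS.inv_idem hf, hf]
  have ht : t = j u := by
    rw [hb1, map_mul, hρ, h4, hS.rr]
  have hbb : b * (b * ivA b) = b := by
    rw [hCl, ← mul_assoc, hA.rr]
  have hb5 : u * ivU (ρ t) = i b := by
    rw [hb1, mul_assoc, ← hb2, ← map_mul, hbb]
  have hba : b = a := hi (by rw [← hb5, ht, ha])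
  rw [hba, ht]
end

section
/- Let A be a semilattice of groups. The set iend(A) of relatively invertible endomorphisms of A forms an inverse subsemigroup of End(A), isomorphic to the inverse semigroup of isomorphisms between unital ideals of A (where φ ∈ iend(A) corresponds to its restriction φ|_{e_φ A} : e_φ A → φ(e_φ)A). -/
/-- A relatively invertible endomorphism of `A` (Lausch): there are
`ψ ∈ End A` and an idempotent `e` with `ψ∘φ = e·`, `φ∘ψ = φ(e)·`, where `e` is
the identity of `ψ(A)` and `φ(e)` the identity of `φ(A)`. -/
def RelInv {A : Type*} [Semigroup A] (φ : A →ₙ* A) : Prop :=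
  ∃ (ψ : A →ₙ* A) (e : A), IsIdempotentElem e ∧
    (∀ a, ψ (φ a) = e * a) ∧ (∀ a, φ (ψ a) = φ e * a) ∧
    (∀ a, e * ψ a = ψ a ∧ ψ a * e = ψ a) ∧
    (∀ a, φ e * φ a = φ a ∧ φ a * φ e = φ a)

/-- A partial bijection of `A` which is an isomorphism between two unital
ideals `eA → fA` (with `e`, `f` central idempotents), encoded as a `PEquiv`
whose domain is `eA = {a | e * a = a}`, whose range is `fA`, and which is
multiplicative. -/
def IsUIdealIso {A : Type*} [Semigroup A] (χ : A ≃. A) : Prop :=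
  (∃ e : A, IsIdempotentElem e ∧ (∀ a, e * a = a * e) ∧
    ∀ a, (χ.toFun a).isSome ↔ e * a = a) ∧
  (∃ f : A, IsIdempotentElem f ∧ (∀ a, f * a = a * f) ∧
    ∀ a, (χ.invFun a).isSome ↔ f * a = a) ∧
  (∀ a b c d : A, χ.toFun a = some c → χ.toFun b = some d →
    χ.toFun (a * b) = some (c * d))


/-!
Idempotents of an inverse semigroup commute, and when `a a⁻¹ = a⁻¹ a` they are central.
Centrality makes the idempotent `e_φ` of a relatively invertible `φ` unique, and the pair
`(ψ̄ φ̄, ψ̄(e_φ) e_ψ)` witnesses relative invertibility of `φ ψ`. Restriction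
`φ ↦ φ|_{e_φ A}` is then injective (since `φ a = φ (e_φ a)`), turns composition into
composition of partial bijections, and is onto the isomorphisms `χ : eA → fA` of unital
ideals, because `a ↦ χ (e a)` is relatively invertible with relative inverse
`b ↦ χ⁻¹ (f b)`. Uniqueness of inverses in `iend A` is transported from partial bijections.
-/

namespace InvSemi

variable {S : Type*} [Semigroup S] {iv : S → S}

theorem iv_eq_self (h : InvSemi S iv) {e : S} (he : IsIdempotentElem e) : iv e = e :=
  (h.uniq e e (by rw [he.eq, he.eq]) (by rw [he.eq, he.eq])).symm

theorem isIdempotentElem_mul (h : InvSemi S iv) {e f : S} (he : IsIdempotentElem e)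
    (hf : IsIdempotentElem f) : IsIdempotentElem (e * f) := by
  set x := iv (e * f)
  -- `f x e` is an idempotent inverse of `e f`, so `e f = iv (f x e) = f x e`.
  have hy : IsIdempotentElem (f * x * e) :=
    calc f * x * e * (f * x * e) = f * (x * (e * f) * x) * e := by simp only [mul_assoc]
      _ = f * x * e := by rw [h.ri]
  have h₁ : f * x * e * (e * f) * (f * x * e) = f * x * e :=
    calc f * x * e * (e * f) * (f * x * e) = f * x * (e * e) * (f * f) * x * e := by
          simp only [mul_assoc]
      _ = f * x * e * (f * x * e) := by rw [he.eq, hf.eq]; simp only [mul_assoc]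
      _ = f * x * e := hy.eq
  have h₂ : e * f * (f * x * e) * (e * f) = e * f :=
    calc e * f * (f * x * e) * (e * f) = e * (f * f) * x * (e * e) * f := by
          simp only [mul_assoc]
      _ = e * f * x * (e * f) := by rw [he.eq, hf.eq]; simp only [mul_assoc]
      _ = e * f := h.rr _
  rw [h.uniq _ _ h₁ h₂, h.iv_eq_self hy]
  exact hy

theorem commute_of_isIdempotentElem (h : InvSemi S iv) {e f : S} (he : IsIdempotentElem e)
    (hf : IsIdempotentElem f) : Commute e f := by
  have hef := h.isIdempotentElem_mul he hf
  have hfe := h.isIdempotentElem_mul hf he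
  have h₁ : e * f * (f * e) * (e * f) = e * f :=
    calc e * f * (f * e) * (e * f) = e * (f * f) * (e * e) * f := by simp only [mul_assoc]
      _ = e * f * (e * f) := by rw [he.eq, hf.eq]; simp only [mul_assoc]
      _ = e * f := hef.eq
  have h₂ : f * e * (e * f) * (f * e) = f * e :=
    calc f * e * (e * f) * (f * e) = f * (e * e) * (f * f) * e := by simp only [mul_assoc]
      _ = f * e * (f * e) := by rw [he.eq, hf.eq]; simp only [mul_assoc]
      _ = f * e := hfe.eq
  show e * f = f * e
  rw [h.uniq _ _ h₁ h₂, h.iv_eq_self hef]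

theorem isIdempotentElem_mul_iv (h : InvSemi S iv) (a : S) : IsIdempotentElem (a * iv a) := by
  rw [IsIdempotentElem, ← mul_assoc, h.rr]

theorem iv_idem_mul (h : InvSemi S iv) {e : S} (he : IsIdempotentElem e) (b : S) :
    iv (e * b) = iv b * e := by
  have hc := h.commute_of_isIdempotentElem he (h.isIdempotentElem_mul_iv b)
  refine (h.uniq _ _ ?_ ?_).symm
  · calc e * b * (iv b * e) * (e * b) = e * (b * iv b) * e * b := by
          simp only [mul_assoc, he.mul_self_mul]
      _ = e * (e * (b * iv b)) * b := by rw [mul_assoc e (b * iv b) e, ← hc.eq]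
      _ = e * (b * iv b * b) := by simp only [mul_assoc, he.mul_self_mul]
      _ = e * b := by rw [h.rr]
  · calc iv b * e * (e * b) * (iv b * e) = iv b * (e * (b * iv b)) * e := by
          simp only [mul_assoc, he.mul_self_mul]
      _ = iv b * (b * iv b * e) * e := by rw [hc.eq]
      _ = iv b * b * iv b * e := by simp only [mul_assoc, he.eq]
      _ = iv b * e := by rw [h.ri]

theorem commute_of_isIdempotentElem_of_mul_iv (h : InvSemi S iv)
    (hCl : ∀ a, a * iv a = iv a * a) {e : S} (he : IsIdempotentElem e) (a : S) :
    Commute e a := by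
  have hc := h.commute_of_isIdempotentElem he (h.isIdempotentElem_mul_iv a)
  -- Clifford's condition for `e a`, whose inverse is `a⁻¹ e`.
  have key : iv a * e * a = a * iv a * e := by
    have := hCl (e * a)
    rw [h.iv_idem_mul he] at this
    calc iv a * e * a = iv a * e * (e * a) := by simp only [mul_assoc, he.mul_self_mul]
      _ = e * a * (iv a * e) := this.symm
      _ = e * (a * iv a) * e := by simp only [mul_assoc]
      _ = a * iv a * e := by rw [hc.eq, mul_assoc, he.eq]
  calc e * a = e * (a * iv a) * a := by rw [mul_assoc e, h.rr]
    _ = a * (iv a * e * a) := by rw [hc.eq]; simp only [mul_assoc]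
    _ = a * (iv a * a * e) := by rw [key, hCl]
    _ = a * e := by rw [← mul_assoc, ← mul_assoc, h.rr]

end InvSemi

def IdempotentsCentral (A : Type*) [Mul A] : Prop :=
  ∀ ⦃e : A⦄, IsIdempotentElem e → ∀ a, Commute e a

section

variable {A : Type*} [Semigroup A]

/-- `RelInv φ` without its right-hand identities, which are automatic once idempotents
are central. -/
structure RelInvData (φ ψ : A →ₙ* A) (e : A) : Prop where
  isIdempotentElem : IsIdempotentElem e
  inv_apply_apply : ∀ a, ψ (φ a) = e * a
  apply_inv_apply : ∀ a, φ (ψ a) = φ e * a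
  idem_mul_inv_apply : ∀ a, e * ψ a = ψ a
  map_idem_mul_apply : ∀ a, φ e * φ a = φ a

theorem RelInv.exists_relInvData {φ : A →ₙ* A} (h : RelInv φ) :
    ∃ ψ e, RelInvData φ ψ e :=
  let ⟨ψ, e, he, hl, hr, hψ, hφ⟩ := h
  ⟨ψ, e, he, hl, hr, fun a => (hψ a).1, fun a => (hφ a).1⟩

theorem RelInv.of_relInvData (hA : IdempotentsCentral A) {φ ψ : A →ₙ* A} {e : A}
    (h : RelInvData φ ψ e) : RelInv φ := by
  have hφe := h.isIdempotentElem.map φ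
  refine ⟨ψ, e, h.isIdempotentElem, h.inv_apply_apply, h.apply_inv_apply,
    fun a => ⟨h.idem_mul_inv_apply a, ?_⟩, fun a => ⟨h.map_idem_mul_apply a, ?_⟩⟩
  · rw [← (hA h.isIdempotentElem _).eq, h.idem_mul_inv_apply]
  · rw [← (hA hφe _).eq, h.map_idem_mul_apply]

noncomputable def RelInv.inv {φ : A →ₙ* A} (h : RelInv φ) : A →ₙ* A :=
  h.exists_relInvData.choose

noncomputable def RelInv.idem {φ : A →ₙ* A} (h : RelInv φ) : A :=
  h.exists_relInvData.choose_spec.choose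

theorem RelInv.relInvData {φ : A →ₙ* A} (h : RelInv φ) : RelInvData φ h.inv h.idem :=
  h.exists_relInvData.choose_spec.choose_spec

namespace RelInvData

variable {φ ψ : A →ₙ* A} {e : A}

theorem symm (h : RelInvData φ ψ e) : RelInvData ψ φ (φ e) where
  isIdempotentElem := h.isIdempotentElem.map φ
  inv_apply_apply := h.apply_inv_apply
  apply_inv_apply a := by rw [h.inv_apply_apply, h.inv_apply_apply, h.isIdempotentElem.eq]
  idem_mul_inv_apply := h.map_idem_mul_apply
  map_idem_mul_apply a := by
    rw [h.inv_apply_apply, h.isIdempotentElem.eq, h.idem_mul_inv_apply]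

theorem apply_idem_mul (h : RelInvData φ ψ e) (a : A) : φ (e * a) = φ a := by
  rw [map_mul, h.map_idem_mul_apply]

theorem comp_inv_comp (h : RelInvData φ ψ e) : φ.comp (ψ.comp φ) = φ :=
  MulHom.ext fun a => by simp only [MulHom.comp_apply, h.inv_apply_apply, h.apply_idem_mul]

theorem inv_comp_comp (h : RelInvData φ ψ e) : ψ.comp (φ.comp ψ) = ψ :=
  MulHom.ext fun a => by simp only [MulHom.comp_apply, h.inv_apply_apply, h.idem_mul_inv_apply]

theorem idem_eq (hA : IdempotentsCentral A) {ψ' : A →ₙ* A} {e' : A} (h : RelInvData φ ψ e)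
    (h' : RelInvData φ ψ' e') : e = e' := by
  -- `φ e` and `φ e'` are both identities of `φ A`, and `ψ` sends them to `e` and `e e'`.
  have hφ : φ e = φ e' :=
    calc φ e = φ e' * φ e := (h'.map_idem_mul_apply e).symm
      _ = φ e * φ e' := ((hA (h.isIdempotentElem.map φ) _).eq).symm
      _ = φ e' := h.map_idem_mul_apply e'
  calc e = e * e' := by rw [← h.inv_apply_apply, ← hφ, h.inv_apply_apply, h.isIdempotentElem.eq]
    _ = e' * e := (hA h.isIdempotentElem _).eq
    _ = e' := by
      rw [← h'.inv_apply_apply, hφ, h'.inv_apply_apply, h'.isIdempotentElem.eq]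

theorem comp (hA : IdempotentsCentral A) {φ' ψ' : A →ₙ* A} {e' : A}
    (h : RelInvData φ ψ e) (h' : RelInvData φ' ψ' e') :
    RelInvData (φ.comp φ') (ψ'.comp ψ) (ψ' e * e') := by
  have he := h.isIdempotentElem
  have he' := h'.isIdempotentElem
  have hφe := he.map φ
  have hφ'e' := he'.map φ'
  have hw : φ (φ' (ψ' e * e')) = φ (φ' e') * φ e :=
    calc φ (φ' (ψ' e * e')) = φ (φ' e') * φ e * φ (φ' e') := by
          rw [map_mul, h'.apply_inv_apply, map_mul, map_mul]
      _ = φ (φ' e') * φ e := by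
          rw [mul_assoc, (hA hφe _).eq, (hφ'e'.map φ).mul_self_mul]
  refine ⟨(he.map ψ').mul_of_commute (hA (he.map ψ') _) he', fun a => ?_, fun a => ?_,
    fun a => ?_, fun a => ?_⟩
  · simp only [MulHom.comp_apply, h.inv_apply_apply, map_mul, h'.inv_apply_apply, mul_assoc]
  · change φ (φ' (ψ' (ψ a))) = φ (φ' (ψ' e * e')) * a
    rw [hw, h'.apply_inv_apply, map_mul, h.apply_inv_apply, mul_assoc]
  · simp only [MulHom.comp_apply, mul_assoc, h'.idem_mul_inv_apply, ← map_mul,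
      h.idem_mul_inv_apply]
  · change φ (φ' (ψ' e * e')) * φ (φ' a) = φ (φ' a)
    rw [hw, mul_assoc, h.map_idem_mul_apply, ← map_mul, h'.map_idem_mul_apply]

end RelInvData

theorem RelInv.comp (hA : IdempotentsCentral A) {φ ψ : A →ₙ* A} (hφ : RelInv φ)
    (hψ : RelInv ψ) : RelInv (φ.comp ψ) :=
  .of_relInvData hA (hφ.relInvData.comp hA hψ.relInvData)

theorem PEquiv.apply_eq_some_of_trans_trans_eq {α β : Type*} {f : α ≃. β} {g : β ≃. α}
    (h : (f.trans g).trans f = f) {a : α} {b : β} (hab : f a = some b) : g b = some a := by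
  have hfgf : ((f.trans g).trans f) a = some b := by rw [h]; exact hab
  obtain ⟨d, hd, hfd⟩ := (PEquiv.trans_eq_some _ _ _ _).1 hfgf
  obtain ⟨c, hc, hgc⟩ := (PEquiv.trans_eq_some _ _ _ _).1 hd
  obtain rfl : c = b := Option.some_injective _ (hc.symm.trans hab)
  obtain rfl : d = a := f.inj hfd hab
  exact hgc

theorem PEquiv.eq_symm_of_trans_trans_eq {α β : Type*} {f : α ≃. β} {g : β ≃. α}
    (h₁ : (f.trans g).trans f = f) (h₂ : (g.trans f).trans g = g) : g = f.symm :=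
  PEquiv.ext fun b => Option.ext fun a => by
    rw [f.eq_some_iff]
    exact ⟨apply_eq_some_of_trans_trans_eq h₂, apply_eq_some_of_trans_trans_eq h₁⟩

namespace RelInvData

variable {φ ψ : A →ₙ* A} {e : A}

open Classical in
noncomputable def restrict (h : RelInvData φ ψ e) : A ≃. A where
  toFun a := if e * a = a then some (φ a) else none
  invFun b := if φ e * b = b then some (ψ b) else none
  inv a b := by
    simp only [Option.ite_none_right_eq_some, Option.some.injEq]
    constructor
    · rintro ⟨hb, rfl⟩
      exact ⟨h.idem_mul_inv_apply b, by rw [h.apply_inv_apply, hb]⟩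
    · rintro ⟨ha, rfl⟩
      exact ⟨h.map_idem_mul_apply a, by rw [h.inv_apply_apply, ha]⟩

open Classical in
theorem restrict_apply (h : RelInvData φ ψ e) (a : A) :
    h.restrict a = if e * a = a then some (φ a) else none :=
  rfl

theorem restrict_eq_some_iff (h : RelInvData φ ψ e) {a b : A} :
    h.restrict a = some b ↔ e * a = a ∧ φ a = b := by
  simp only [restrict_apply, Option.ite_none_right_eq_some, Option.some.injEq]

theorem restrict_congr (hA : IdempotentsCentral A) {φ' ψ' : A →ₙ* A} {e' : A}
    (hφ : φ = φ') (h : RelInvData φ ψ e) (h' : RelInvData φ' ψ' e') :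
    h.restrict = h'.restrict := by
  subst hφ
  exact PEquiv.ext fun a => by rw [restrict_apply, restrict_apply, h.idem_eq hA h']

open Classical in
theorem isUIdealIso_restrict (hA : IdempotentsCentral A) (h : RelInvData φ ψ e) :
    IsUIdealIso h.restrict := by
  have he := h.isIdempotentElem
  refine ⟨⟨e, he, fun a => (hA he a).eq, fun a => ?_⟩,
    ⟨φ e, he.map φ, fun b => (hA (he.map φ) b).eq, fun b => ?_⟩,
    fun a b c d hac hbd => ?_⟩
  · change (h.restrict a).isSome ↔ _
    by_cases ha : e * a = a <;> simp [restrict_apply, ha]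
  · change (if φ e * b = b then some (ψ b) else none).isSome ↔ _
    by_cases hb : φ e * b = b <;> simp [hb]
  · obtain ⟨ha, rfl⟩ := h.restrict_eq_some_iff.1 hac
    obtain ⟨hb, rfl⟩ := h.restrict_eq_some_iff.1 hbd
    exact h.restrict_eq_some_iff.2 ⟨by rw [← mul_assoc, ha], map_mul φ a b⟩

theorem restrict_injective (hA : IdempotentsCentral A) {φ' ψ' : A →ₙ* A} {e' : A}
    (h : RelInvData φ ψ e) (h' : RelInvData φ' ψ' e') (hr : h.restrict = h'.restrict) :
    φ = φ' := by
  have hdom {a} (ha : e * a = a) : e' * a = a ∧ φ' a = φ a :=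
    h'.restrict_eq_some_iff.1 (hr ▸ h.restrict_eq_some_iff.2 ⟨ha, rfl⟩)
  have hdom' {a} (ha : e' * a = a) : e * a = a :=
    (h.restrict_eq_some_iff.1 (hr.symm ▸ h'.restrict_eq_some_iff.2 ⟨ha, rfl⟩)).1
  have hee : e = e' :=
    calc e = e' * e := (hdom h.isIdempotentElem.eq).1.symm
      _ = e * e' := ((hA h'.isIdempotentElem _).eq)
      _ = e' := hdom' h'.isIdempotentElem.eq
  refine MulHom.ext fun a => ?_
  rw [← h.apply_idem_mul, ← (hdom (h.isIdempotentElem.mul_self_mul a)).2, hee,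
    h'.apply_idem_mul]

theorem idem_comp_mul_eq_self_iff (hA : IdempotentsCentral A) {φ' ψ' : A →ₙ* A} {e' : A}
    (h : RelInvData φ ψ e) (h' : RelInvData φ' ψ' e') {a : A} :
    ψ' e * e' * a = a ↔ e' * a = a ∧ e * φ' a = φ' a := by
  have he := h.isIdempotentElem
  constructor
  · intro ha
    have he'a : e' * a = a := by
      rw [← ha, ← mul_assoc, ← mul_assoc, h'.idem_mul_inv_apply]
    refine ⟨he'a, ?_⟩
    have hφ'a : φ' a = φ' (ψ' e) * φ' a :=
      calc φ' a = φ' (ψ' e * e' * a) := by rw [ha]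
        _ = φ' (ψ' e) * φ' a := by
          rw [map_mul, map_mul, mul_assoc, h'.map_idem_mul_apply]
    calc e * φ' a = e * (φ' (ψ' e) * φ' a) := by rw [← hφ'a]
      _ = φ' (ψ' e) * φ' a := by
        rw [h'.apply_inv_apply, ← mul_assoc, ← mul_assoc, (hA he _).eq, he.mul_mul_self]
      _ = φ' a := hφ'a.symm
  · rintro ⟨he'a, hφ'a⟩
    calc ψ' e * e' * a = ψ' e * ψ' (φ' a) := by rw [mul_assoc, he'a, h'.inv_apply_apply, he'a]
      _ = a := by rw [← map_mul, hφ'a, h'.inv_apply_apply, he'a]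

theorem restrict_comp (hA : IdempotentsCentral A) {φ' ψ' : A →ₙ* A} {e' : A}
    (h : RelInvData φ ψ e) (h' : RelInvData φ' ψ' e') :
    (h.comp hA h').restrict = h'.restrict.trans h.restrict := by
  refine PEquiv.ext fun a => Option.ext fun c => ?_
  simp only [PEquiv.trans_eq_some, restrict_eq_some_iff,
    h.idem_comp_mul_eq_self_iff hA h', MulHom.comp_apply]
  constructor
  · rintro ⟨⟨he'a, hφ'a⟩, rfl⟩
    exact ⟨_, ⟨he'a, rfl⟩, hφ'a, rfl⟩
  · rintro ⟨_, ⟨he'a, rfl⟩, hφ'a, rfl⟩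
    exact ⟨⟨he'a, hφ'a⟩, rfl⟩

theorem restrict_eq_symm (hA : IdempotentsCentral A) {φ' ψ' : A →ₙ* A} {e' : A}
    (h : RelInvData φ ψ e) (h' : RelInvData φ' ψ' e') (h₁ : φ.comp (φ'.comp φ) = φ)
    (h₂ : φ'.comp (φ.comp φ') = φ') : h'.restrict = h.restrict.symm := by
  refine PEquiv.eq_symm_of_trans_trans_eq ?_ ?_
  · rw [← restrict_comp hA h' h, ← restrict_comp hA h (h'.comp hA h)]
    exact restrict_congr hA h₁ _ _
  · rw [← restrict_comp hA h h', ← restrict_comp hA h' (h.comp hA h')]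
    exact restrict_congr hA h₂ _ _

end RelInvData

theorem RelInv.existsUnique_inverse (hA : IdempotentsCentral A) {φ : A →ₙ* A} (h : RelInv φ) :
    ∃! ψ : A →ₙ* A, RelInv ψ ∧ φ.comp (ψ.comp φ) = φ ∧ ψ.comp (φ.comp ψ) = ψ := by
  have hd := h.relInvData
  refine ⟨h.inv, ⟨.of_relInvData hA hd.symm, hd.comp_inv_comp, hd.inv_comp_comp⟩, ?_⟩
  rintro ψ ⟨hψ, h₁, h₂⟩
  exact hψ.relInvData.restrict_injective hA hd.symm
    ((hd.restrict_eq_symm hA hψ.relInvData h₁ h₂).trans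
      (hd.restrict_eq_symm hA hd.symm hd.comp_inv_comp hd.inv_comp_comp).symm)

structure PEquiv.IsMulOnIdeal (χ : A ≃. A) (e : A) : Prop where
  isIdempotentElem : IsIdempotentElem e
  isSome_iff : ∀ a, (χ a).isSome ↔ e * a = a
  map_mul : ∀ {a b c d}, χ a = some c → χ b = some d → χ (a * b) = some (c * d)

namespace PEquiv.IsMulOnIdeal

variable {χ : A ≃. A} {e f : A}

theorem mul_eq_self_of_apply_eq_some (h : IsMulOnIdeal χ e) {a b : A} (hab : χ a = some b) :
    e * a = a :=
  (h.isSome_iff a).1 (by rw [hab]; rfl)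

theorem isSome_apply_idem_mul (h : IsMulOnIdeal χ e) (a : A) : (χ (e * a)).isSome :=
  (h.isSome_iff _).2 (h.isIdempotentElem.mul_self_mul a)

noncomputable def toMulHom (hA : IdempotentsCentral A) (h : IsMulOnIdeal χ e) : A →ₙ* A where
  toFun a := (χ (e * a)).get (h.isSome_apply_idem_mul a)
  map_mul' a b := Option.some_injective _ <| by
    have he := h.isIdempotentElem
    have hab : e * (a * b) = e * a * (e * b) := by
      rw [mul_assoc, ← mul_assoc a, ← (hA he a).eq, mul_assoc, he.mul_self_mul]
    rw [Option.some_get, hab]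
    exact h.map_mul (Option.some_get _).symm (Option.some_get _).symm

theorem apply_idem_mul (hA : IdempotentsCentral A) (h : IsMulOnIdeal χ e) (a : A) :
    χ (e * a) = some (h.toMulHom hA a) :=
  (Option.some_get _).symm

variable (hA : IdempotentsCentral A) (h : IsMulOnIdeal χ e) (h' : IsMulOnIdeal χ.symm f)
include hA h h'

theorem mul_toMulHom (a : A) : f * h.toMulHom hA a = h.toMulHom hA a :=
  h'.mul_eq_self_of_apply_eq_some (χ.eq_some_iff.2 (h.apply_idem_mul hA a))

theorem toMulHom_apply_toMulHom (a : A) : h'.toMulHom hA (h.toMulHom hA a) = e * a :=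
  Option.some_injective _ <| by
    rw [← h'.apply_idem_mul hA, mul_toMulHom hA h h', χ.eq_some_iff, h.apply_idem_mul hA]

theorem toMulHom_apply_idem : h.toMulHom hA e = f := by
  set g := h.toMulHom hA e
  have hχe : χ e = some g := by rw [← h.apply_idem_mul hA, h.isIdempotentElem.eq]
  obtain ⟨a, ha⟩ := Option.isSome_iff_exists.1 ((h'.isSome_iff f).2 h'.isIdempotentElem.eq)
  have hχa : χ a = some f := χ.eq_some_iff.1 ha
  have hgf : g * f = f := by
    have hχea := h.map_mul hχe hχa
    rw [h.mul_eq_self_of_apply_eq_some hχa, hχa] at hχea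
    exact (Option.some_injective _ hχea).symm
  calc g = f * g := (mul_toMulHom hA h h' e).symm
    _ = g * f := (hA h'.isIdempotentElem g).eq
    _ = f := hgf

theorem relInvData : RelInvData (h.toMulHom hA) (h'.toMulHom hA) e where
  isIdempotentElem := h.isIdempotentElem
  inv_apply_apply := toMulHom_apply_toMulHom hA h h'
  apply_inv_apply a := by
    rw [toMulHom_apply_idem hA h h']
    exact toMulHom_apply_toMulHom hA h' h a
  idem_mul_inv_apply := mul_toMulHom hA h' h
  map_idem_mul_apply a := by
    rw [toMulHom_apply_idem hA h h']
    exact mul_toMulHom hA h h' a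

theorem restrict_relInvData : (relInvData hA h h').restrict = χ :=
  PEquiv.ext fun a => by
    rw [RelInvData.restrict_apply]
    split_ifs with ha
    · rw [← h.apply_idem_mul hA, ha]
    · exact (Option.not_isSome_iff_eq_none.1 (mt (h.isSome_iff a).1 ha)).symm

end PEquiv.IsMulOnIdeal

theorem IsUIdealIso.exists_relInvData_restrict_eq (hA : IdempotentsCentral A) {χ : A ≃. A}
    (hχ : IsUIdealIso χ) : ∃ φ ψ e, ∃ h : RelInvData φ ψ e, h.restrict = χ := by
  obtain ⟨⟨e, he, -, hdom⟩, ⟨f, hf, -, hran⟩, hmul⟩ := hχ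
  have h : χ.IsMulOnIdeal e := ⟨he, hdom, hmul _ _ _ _⟩
  have h' : χ.symm.IsMulOnIdeal f := ⟨hf, hran, fun hac hbd =>
    χ.eq_some_iff.2 (hmul _ _ _ _ (χ.eq_some_iff.1 hac) (χ.eq_some_iff.1 hbd))⟩
  exact ⟨_, _, _, _, h.restrict_relInvData hA h'⟩

noncomputable def restrictEquiv (hA : IdempotentsCentral A) :
    {φ : A →ₙ* A // RelInv φ} ≃ {χ : A ≃. A // IsUIdealIso χ} :=
  Equiv.ofBijective
    (fun φ => ⟨φ.2.relInvData.restrict, φ.2.relInvData.isUIdealIso_restrict hA⟩)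
    ⟨fun φ ψ hφψ => Subtype.ext <|
        φ.2.relInvData.restrict_injective hA ψ.2.relInvData (congrArg Subtype.val hφψ),
      fun χ => by
        obtain ⟨φ, ψ, e, h, hχ⟩ := χ.2.exists_relInvData_restrict_eq hA
        have hφ : RelInv φ := .of_relInvData hA h
        exact ⟨⟨φ, hφ⟩, Subtype.ext ((RelInvData.restrict_congr hA rfl hφ.relInvData h).trans hχ)⟩⟩

end

/-- The relatively invertible endomorphisms of a semilattice of groups `A`
form an inverse subsemigroup of `End A`, isomorphic (via restriction
`φ ↦ φ|_{e_φ A}`) to the inverse semigroup of isomorphisms between unital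
ideals of `A`, whose product is composition on the largest possible domain
(`PEquiv.trans`). -/
theorem stmt11 {A : Type*} [Semigroup A] (ivA : A → A) (hA : InvSemi A ivA)
    (hCl : ∀ a : A, a * ivA a = ivA a * a) :
    ∃ hclosed : ∀ φ ψ : A →ₙ* A, RelInv φ → RelInv ψ → RelInv (φ.comp ψ),
    (∀ φ : A →ₙ* A, RelInv φ → ∃! ψ : A →ₙ* A, RelInv ψ ∧
      φ.comp (ψ.comp φ) = φ ∧ ψ.comp (φ.comp ψ) = ψ) ∧
    ∃ Φ : {φ : A →ₙ* A // RelInv φ} ≃ {χ : A ≃. A // IsUIdealIso χ},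
      (∀ φ ψ : {φ : A →ₙ* A // RelInv φ},
        (Φ ⟨φ.1.comp ψ.1, hclosed _ _ φ.2 ψ.2⟩).1 = (Φ ψ).1.trans (Φ φ).1) ∧
      (∀ (φ : {φ : A →ₙ* A // RelInv φ}) (a b : A),
        (Φ φ).1.toFun a = some b → b = φ.1 a) := by
  have hcen : IdempotentsCentral A := fun _ he => hA.commute_of_isIdempotentElem_of_mul_iv hCl he
  refine ⟨fun φ ψ hφ hψ => hφ.comp hcen hψ, fun φ hφ => hφ.existsUnique_inverse hcen,
    restrictEquiv hcen, fun φ ψ => ?_, fun φ a b hab => ?_⟩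
  · exact (RelInvData.restrict_congr hcen rfl (φ.2.comp hcen ψ.2).relInvData _).trans
      (φ.2.relInvData.restrict_comp hcen ψ.2.relInvData)
  · exact (φ.2.relInvData.restrict_eq_some_iff.1 hab).2.symm
end

section
/- Let A be a semilattice of groups. Every idempotent ε of the inverse semigroup iend(A) of relatively invertible endomorphisms of A has the form ε(a) = ea for a unique idempotent e ∈ E(A). -/
/-- An idempotent is its own generalized inverse. -/
lemma invSemi_idem_self_inv {S : Type*} [Semigroup S] {iv : S → S} (h : InvSemi S iv)
    {g : S} (hg : IsIdempotentElem g) : iv g = g :=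
  (h.uniq g g (by rw [hg, hg]) (by rw [hg, hg])).symm

/-- `iv` is an involution. -/
lemma invSemi_iv_iv {S : Type*} [Semigroup S] {iv : S → S} (h : InvSemi S iv)
    (s : S) : iv (iv s) = s :=
  (h.uniq (iv s) s (h.ri s) (h.rr s)).symm

/-- The product of two idempotents is idempotent. -/
lemma invSemi_idem_mul {S : Type*} [Semigroup S] {iv : S → S} (h : InvSemi S iv)
    {g f : S} (hg : IsIdempotentElem g) (hf : IsIdempotentElem f) :
    IsIdempotentElem (g * f) := by
  set x := g * f with hx
  have hg' : ∀ t : S, g * (g * t) = g * t := fun t => by rw [← mul_assoc, hg]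
  have hf' : ∀ t : S, f * (f * t) = f * t := fun t => by rw [← mul_assoc, hf]
  have hy : f * iv x * g = iv x := by
    apply h.uniq
    · -- x * (f * iv x * g) * x = x
      have := h.rr x
      calc x * (f * iv x * g) * x = x * iv x * x := by
            simp only [hx, mul_assoc, hf', hg']
        _ = x := h.rr x
    · -- (f * iv x * g) * x * (f * iv x * g) = f * iv x * g
      have := h.ri x
      calc (f * iv x * g) * x * (f * iv x * g)
          = f * (iv x * x * iv x) * g := by
            simp only [hx, mul_assoc, hg', hf']
        _ = f * iv x * g := by rw [h.ri]
  have hyidem : IsIdempotentElem (iv x) := by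
    rw [← hy]
    show (f * iv x * g) * (f * iv x * g) = f * iv x * g
    calc (f * iv x * g) * (f * iv x * g)
        = f * (iv x * x * iv x) * g := by
          simp only [hx, mul_assoc, hg', hf']
      _ = f * iv x * g := by rw [h.ri]
  have hxiv : x = iv x := by
    conv_lhs => rw [← invSemi_iv_iv h x]
    exact invSemi_idem_self_inv h hyidem
  have hx2 : g * f = iv (g * f) := hxiv
  show IsIdempotentElem (g * f)
  rw [hx2]
  exact hyidem

/-- Idempotents commute in an inverse semigroup. -/
lemma invSemi_idem_comm {S : Type*} [Semigroup S] {iv : S → S} (h : InvSemi S iv)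
    {g f : S} (hg : IsIdempotentElem g) (hf : IsIdempotentElem f) :
    g * f = f * g := by
  have hgf := invSemi_idem_mul h hg hf
  have hfg := invSemi_idem_mul h hf hg
  have hg' : ∀ t : S, g * (g * t) = g * t := fun t => by rw [← mul_assoc, hg]
  have hf' : ∀ t : S, f * (f * t) = f * t := fun t => by rw [← mul_assoc, hf]
  have : f * g = iv (g * f) := by
    apply h.uniq
    · calc (g * f) * (f * g) * (g * f) = (g * f) * (g * f) := by
            simp only [mul_assoc, hf', hg']
        _ = g * f := hgf
    · calc (f * g) * (g * f) * (f * g) = (f * g) * (f * g) := by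
            simp only [mul_assoc, hf', hg']
        _ = f * g := hfg
  rw [this, invSemi_idem_self_inv h hgf]

/-- Every idempotent of the inverse semigroup `iend A` of relatively invertible
endomorphisms of a semilattice of groups `A` is multiplication by a unique
idempotent of `A`. -/
theorem stmt12 {A : Type*} [Semigroup A] (ivA : A → A) (hA : InvSemi A ivA)
    (hCl : ∀ a : A, a * ivA a = ivA a * a)
    (ε : A →ₙ* A) (hε : RelInv ε) (hεε : ε.comp ε = ε) :
    ∃! e : A, IsIdempotentElem e ∧ ∀ a, ε a = e * a := by
  obtain ⟨ψ, e, he, h1, h2, h3, h4⟩ := hε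
  have hid : ∀ a, ε (ε a) = ε a := fun a => DFunLike.congr_fun hεε a
  set f := ε e with hf
  have hfidem : IsIdempotentElem f := by
    show ε e * ε e = ε e
    rw [← map_mul, he]
  -- ε (f * a) = f * a
  have hεf : ∀ a, ε (f * a) = f * a := fun a => by
    rw [← h2 a, hid]
  -- ψ (f * a) = ψ a
  have hψf : ∀ a, ψ (f * a) = ψ a := fun a => by
    rw [← h2 a, h1, (h3 a).1]
  -- ψ a = e * (f * a):  ψ a = ψ (f*a) = ψ (ε (f*a)) = e * (f*a)
  have hψ : ∀ a, ψ a = e * (f * a) := fun a => by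
    rw [← hψf a]
    conv_lhs => rw [← hεf a]
    rw [h1]
  -- e * f = e : from ψ f = e and ψ f = e * (f * f) = e * f
  have hef : e * f = e := by
    have h1' : ψ f = e * e := h1 e
    rw [he] at h1'
    have h2' : ψ f = e * (f * f) := hψ f
    rw [hfidem] at h2'
    rw [← h2', h1']
  -- ψ a = e * a
  have hψe : ∀ a, ψ a = e * a := fun a => by
    rw [hψ a, ← mul_assoc, hef]
  -- ε a = f * a
  have key : ∀ a, ε a = f * a := fun a => by
    have : ε (ψ a) = f * a := h2 a
    rw [hψe a] at this
    rw [← this, map_mul, (h4 a).1]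
  refine ⟨f, ⟨hfidem, key⟩, ?_⟩
  rintro e' ⟨he', hkey'⟩
  have hall : ∀ a, e' * a = f * a := fun a => by rw [← key a, hkey' a]
  have h1 : f = e' * f := by rw [hall f, hfidem]
  have h2 : e' = f * e' := by rw [← hall e', he']
  calc e' = f * e' := h2
    _ = e' * f := invSemi_idem_comm hA hfidem he'
    _ = f := h1.symm
end

section
/- Let φ be a relatively invertible endomorphism of a semilattice of groups A. For any idempotent f ∈ E(A) with f ≤ e_φ, one has φ(A_f) = A_{φ(f)}, where A_g denotes the maximal subgroup {a ∈ A : aa⁻¹ = a⁻¹a = g}. -/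
/-- A relatively invertible endomorphism `φ` of a semilattice of groups `A`
(with relative inverse `ψ` and idempotent `e`) maps the maximal subgroup `A_f`
onto `A_{φ(f)}` for every idempotent `f ≤ e = e_φ`. -/
theorem stmt13 {A : Type*} [Semigroup A] (ivA : A → A) (hA : InvSemi A ivA)
    (hCl : ∀ a : A, a * ivA a = ivA a * a)
    (φ ψ : A →ₙ* A) (e : A) (he : IsIdempotentElem e)
    (h1 : ∀ a, ψ (φ a) = e * a) (h2 : ∀ a, φ (ψ a) = φ e * a)
    (h3 : ∀ a, e * ψ a = ψ a ∧ ψ a * e = ψ a)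
    (h4 : ∀ a, φ e * φ a = φ a ∧ φ a * φ e = φ a)
    (f : A) (hf : IsIdempotentElem f) (hfe : f * e = f) :
    φ '' {a : A | a * ivA a = f ∧ ivA a * a = f} =
      {a : A | a * ivA a = φ f ∧ ivA a * a = φ f} := by
  obtain ⟨rr, ri, uniq⟩ := hA
  -- idempotents are their own inverses
  have self_inv : ∀ g : A, g * g = g → ivA g = g := fun g hg =>
    (uniq g g (by rw [hg, hg]) (by rw [hg, hg])).symm
  -- homomorphisms commute with `ivA`
  have iv_hom : ∀ (χ : A →ₙ* A) (a : A), ivA (χ a) = χ (ivA a) := fun χ a =>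
    (uniq (χ a) (χ (ivA a)) (by rw [← map_mul, ← map_mul, rr])
      (by rw [← map_mul, ← map_mul, ri])).symm
  -- the product of two idempotents is idempotent
  have step : ∀ g h : A, g * g = g → h * h = h → (g * h) * (g * h) = g * h := by
    intro g h hg hh
    set x := ivA (g * h) with hxdef
    have Hg : ∀ z : A, g * (g * z) = g * z := fun z => by rw [← mul_assoc, hg]
    have Hh : ∀ z : A, h * (h * z) = h * z := fun z => by rw [← mul_assoc, hh]
    have hri : x * (g * (h * x)) = x := by
      have := ri (g * h); simpa only [mul_assoc] using this
    have hrr : g * (h * (x * (g * h))) = g * h := by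
      have := rr (g * h); simpa only [mul_assoc] using this
    have Hx : ∀ z : A, x * (g * (h * (x * z))) = x * z := fun z => by
      calc x * (g * (h * (x * z))) = (x * (g * (h * x))) * z := by
            simp only [mul_assoc]
        _ = x * z := by rw [hri]
    have hyx : h * x * g = x := by
      apply uniq (g * h)
      · show g * h * (h * x * g) * (g * h) = g * h
        simp only [mul_assoc, Hg, Hh]
        exact hrr
      · show (h * x * g) * (g * h) * (h * x * g) = h * x * g
        simp only [mul_assoc, Hg, Hh, Hx]
    have hxx : x * x = x := by
      conv_lhs => rw [← hyx]
      simp only [mul_assoc, Hx]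
      rw [← mul_assoc]; exact hyx
    have hghx : g * h = x := by
      have h1' : g * h = ivA x := uniq x (g * h)
        (by simp only [mul_assoc]; exact hri)
        (by simp only [mul_assoc]; exact hrr)
      rw [h1', self_inv x hxx]
    rw [hghx]; exact hxx
  -- idempotents commute
  have comm : ∀ g h : A, g * g = g → h * h = h → g * h = h * g := by
    intro g h hg hh
    have Hg : ∀ z : A, g * (g * z) = g * z := fun z => by rw [← mul_assoc, hg]
    have Hh : ∀ z : A, h * (h * z) = h * z := fun z => by rw [← mul_assoc, hh]
    have hgh := step g h hg hh
    have hhg := step h g hh hg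
    have hgh' : g * (h * (g * h)) = g * h := by simpa only [mul_assoc] using hgh
    have hhg' : h * (g * (h * g)) = h * g := by simpa only [mul_assoc] using hhg
    have : h * g = ivA (g * h) := by
      apply uniq
      · show g * h * (h * g) * (g * h) = g * h
        simp only [mul_assoc, Hh, Hg]
        exact hgh'
      · show (h * g) * (g * h) * (h * g) = h * g
        simp only [mul_assoc, Hg, Hh]
        exact hhg'
    rw [this, self_inv _ hgh]
  have hef : e * f = f := by rw [comm e f he hf, hfe]
  ext b
  constructor
  · rintro ⟨a, ⟨ha1, ha2⟩, rfl⟩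
    constructor
    · rw [iv_hom φ a, ← map_mul, ha1]
    · rw [iv_hom φ a, ← map_mul, ha2]
  · rintro ⟨hb1, hb2⟩
    have hfb : φ f * b = b := by
      calc φ f * b = (b * ivA b) * b := by rw [hb1]
        _ = b := rr b
    refine ⟨ψ b, ⟨?_, ?_⟩, ?_⟩
    · show ψ b * ivA (ψ b) = f
      rw [iv_hom ψ b, ← map_mul, hb1, h1, hef]
    · show ivA (ψ b) * ψ b = f
      rw [iv_hom ψ b, ← map_mul, hb2, h1, hef]
    · rw [h2, ← hfb, ← mul_assoc, ← map_mul, hef, hfb]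
end

section
/- Let Λ = (α, λ, f) be a twisted S-module structure on a semilattice of groups A. Then λ_s(f(s⁻¹, s)) = f(s, s⁻¹) for every s ∈ S. -/
/-- A twisted `S`-module structure `Λ = (α, lam, tf)` on a semilattice of
groups `A` (Lausch): `α : E(S) ≅ E(A)` is an isomorphism of semilattices,
`lam s` is a relatively invertible endomorphism of `A` for all `s`, and
`tf : S² → A` is a twisting with `tf s t ∈ A_{α(s t t⁻¹ s⁻¹)}`, subject to
axioms (i)–(v). -/
structure TwistedModule (S A : Type*) [Semigroup S] [Semigroup A]
    (ivS : S → S) (ivA : A → A) where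
  α : S → A
  lam : S → A → A
  tf : S → S → A
  α_idem : ∀ e : S, IsIdempotentElem e → IsIdempotentElem (α e)
  α_inj : ∀ e e' : S, IsIdempotentElem e → IsIdempotentElem e' →
    α e = α e' → e = e'
  α_surj : ∀ a : A, IsIdempotentElem a → ∃ e : S, IsIdempotentElem e ∧ α e = a
  α_mul : ∀ e e' : S, IsIdempotentElem e → IsIdempotentElem e' →
    α (e * e') = α e * α e'
  lam_mul : ∀ s a b, lam s (a * b) = lam s a * lam s b
  lam_relinv : ∀ s : S, ∃ (ψ : A → A) (e : A),
    (∀ a b, ψ (a * b) = ψ a * ψ b) ∧ IsIdempotentElem e ∧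
    (∀ a, ψ (lam s a) = e * a) ∧ (∀ a, lam s (ψ a) = lam s e * a) ∧
    (∀ a, e * ψ a = ψ a ∧ ψ a * e = ψ a) ∧
    (∀ a, lam s e * lam s a = lam s a ∧ lam s a * lam s e = lam s a)
  tf_mem : ∀ s t : S, tf s t * ivA (tf s t) = α (s * t * ivS t * ivS s) ∧
    ivA (tf s t) * tf s t = α (s * t * ivS t * ivS s)
  ax1 : ∀ (e : S) (a : A), IsIdempotentElem e → lam e a = α e * a
  ax2 : ∀ (s e : S), IsIdempotentElem e → lam s (α e) = α (s * e * ivS s)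
  ax3 : ∀ (s t : S) (a : A),
    lam s (lam t a) = tf s t * lam (s * t) a * ivA (tf s t)
  ax4 : ∀ (s e : S), IsIdempotentElem e →
    tf (s * e) e = α (s * e * ivS s) ∧ tf e (e * s) = α (e * s * ivS s)
  ax5 : ∀ s t u : S,
    lam s (tf t u) * tf s (t * u) = tf s t * tf (s * t) u

/-- `λ_s(f(s⁻¹, s)) = f(s, s⁻¹)` for a twisted `S`-module structure on a
semilattice of groups `A`. -/
theorem stmt14 {S A : Type*} [Semigroup S] [Semigroup A]
    (ivS : S → S) (ivA : A → A) (hS : InvSemi S ivS) (hA : InvSemi A ivA)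
    (hCl : ∀ a : A, a * ivA a = ivA a * a)
    (Λ : TwistedModule S A ivS ivA) (s : S) :
    Λ.lam s (Λ.tf (ivS s) s) = Λ.tf s (ivS s) := by
  have hss : ivS (ivS s) = s :=
    (hS.uniq (ivS s) s (hS.ri s) (hS.rr s)).symm
  have he1 : IsIdempotentElem (ivS s * s) := by
    simp only [IsIdempotentElem, ← mul_assoc]; rw [hS.ri]
  have he2 : IsIdempotentElem (s * ivS s) := by
    simp only [IsIdempotentElem, ← mul_assoc]; rw [hS.rr]
  have hse : s * (ivS s * s) = s := by rw [← mul_assoc, hS.rr]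
  have key : ∀ a : A, a * (a * ivA a) = a := fun a => by
    rw [hCl, ← mul_assoc, hA.rr]
  -- membership facts
  have hmem : Λ.tf s (ivS s) * ivA (Λ.tf s (ivS s)) = Λ.α (s * ivS s) := by
    have h := (Λ.tf_mem s (ivS s)).1
    rwa [hss, hS.rr] at h
  have hmem2 : Λ.tf (ivS s) s * ivA (Λ.tf (ivS s) s) = Λ.α (ivS s * s) := by
    have h := (Λ.tf_mem (ivS s) s).1
    rwa [hss, hS.ri] at h
  have hfid : Λ.tf s (ivS s) * Λ.α (s * ivS s) = Λ.tf s (ivS s) := by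
    rw [← hmem, key]
  have hfid2 : Λ.tf (ivS s) s * Λ.α (ivS s * s) = Λ.tf (ivS s) s := by
    rw [← hmem2, key]
  -- values of the twist on idempotent pairs
  have h4a : Λ.tf s (ivS s * s) = Λ.α (s * ivS s) := by
    have h := (Λ.ax4 s (ivS s * s) he1).1
    rwa [hse] at h
  have h4b : Λ.tf (s * ivS s) s = Λ.α (s * ivS s) := by
    have h := (Λ.ax4 s (s * ivS s) he2).2
    rwa [hS.rr] at h
  -- absorption of α(s s⁻¹) by λ_s(f(s⁻¹, s))
  have habs : Λ.lam s (Λ.tf (ivS s) s)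
      = Λ.lam s (Λ.tf (ivS s) s) * Λ.α (s * ivS s) := by
    conv_lhs => rw [← hfid2, Λ.lam_mul, Λ.ax2 s _ he1, hse]
  calc Λ.lam s (Λ.tf (ivS s) s)
      = Λ.lam s (Λ.tf (ivS s) s) * Λ.α (s * ivS s) := habs
    _ = Λ.lam s (Λ.tf (ivS s) s) * Λ.tf s (ivS s * s) := by rw [h4a]
    _ = Λ.tf s (ivS s) * Λ.tf (s * ivS s) s := Λ.ax5 s (ivS s) s
    _ = Λ.tf s (ivS s) * Λ.α (s * ivS s) := by rw [h4b]
    _ = Λ.tf s (ivS s) := hfid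
end

section
/- Let Λ = (α, λ, f) be a twisted S-module structure on a semilattice of groups A. Then α(ss⁻¹)λ_s(a) = λ_s(a) for all s ∈ S and a ∈ A. Moreover, λ_s satisfies the relative invertibility condition with relative inverse λ̄_s = ξ_{f(s⁻¹,s)⁻¹} ∘ λ_{s⁻¹} and idempotent e_{λ_s} = α(s⁻¹s), i.e., λ̄_s ∘ λ_s(a) = α(s⁻¹s)a and λ_s ∘ λ̄_s(a) = α(ss⁻¹)a for all a ∈ A. -/
section Helpers
variable {A : Type*} [Semigroup A] {iv : A → A}

lemma ch {x y z : A} (h : x * y = z) (b : A) : x * (y * b) = z * b := by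
  rw [← mul_assoc, h]

lemma sw {x y : A} (h : x * y = y * x) (b : A) : x * (y * b) = y * (x * b) := by
  rw [← mul_assoc, h, mul_assoc]

lemma iv_iv (h : InvSemi A iv) (a : A) : iv (iv a) = a :=
  (h.uniq (iv a) a (h.ri a) (h.rr a)).symm

lemma iv_idem (h : InvSemi A iv) {e : A} (he : IsIdempotentElem e) : iv e = e :=
  (h.uniq e e (by rw [he, he]) (by rw [he, he])).symm

lemma idem_mul (h : InvSemi A iv) {e f : A} (he : IsIdempotentElem e)
    (hf : IsIdempotentElem f) : IsIdempotentElem (e * f) := by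
  obtain ⟨x, hx⟩ : ∃ x, x = iv (e * f) := ⟨_, rfl⟩
  have hri : x * (e * (f * x)) = x := by
    have := h.ri (e * f); rw [← hx] at this
    simpa only [mul_assoc] using this
  have hri' : ∀ b, x * (e * (f * (x * b))) = x * b := fun b => by
    have : x * (e * (f * (x * b))) = (x * (e * (f * x))) * b := by
      simp only [mul_assoc]
    rw [this, hri]
  have hrr0 : e * (f * (x * (e * f))) = e * f := by
    have := h.rr (e * f); rw [← hx] at this
    simpa only [mul_assoc] using this
  have h1 : f * x * e = x := by
    have g1 : e * f * (f * x * e) * (e * f) = e * f := by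
      have : e * f * (f * x * e) * (e * f) = e * (f * (f * (x * (e * (e * f)))))
          := by simp only [mul_assoc]
      rw [this, ch hf, ch he, hrr0]
    have g2 : f * x * e * (e * f) * (f * x * e) = f * x * e := by
      have : f * x * e * (e * f) * (f * x * e)
          = f * (x * (e * (e * (f * (f * (x * e)))))) := by simp only [mul_assoc]
      rw [this, ch he, ch hf, hri' e, mul_assoc]
    have := h.uniq _ _ g1 g2
    rw [← hx] at this; exact this
  have hxid : IsIdempotentElem x := by
    have h2 : (f * x * e) * (f * x * e) = f * x * e := by
      have : (f * x * e) * (f * x * e) = f * (x * (e * (f * (x * e)))) := by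
        simp only [mul_assoc]
      rw [this, hri' e, mul_assoc]
    rw [h1] at h2; exact h2
  have hefx : e * f = x := by
    calc e * f = iv (iv (e * f)) := (iv_iv h _).symm
      _ = iv x := by rw [← hx]
      _ = x := iv_idem h hxid
  rw [IsIdempotentElem, hefx]; exact hxid

lemma idem_comm (h : InvSemi A iv) {e f : A} (he : IsIdempotentElem e)
    (hf : IsIdempotentElem f) : e * f = f * e := by
  have hef := idem_mul h he hf
  have hfe := idem_mul h hf he
  have hef0 : e * f * (e * f) = e * f := hef
  have hfe0 : f * e * (f * e) = f * e := hfe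
  have hef' : e * (f * (e * f)) = e * f := by simpa only [mul_assoc] using hef0
  have hfe' : f * (e * (f * e)) = f * e := by simpa only [mul_assoc] using hfe0
  have heq : f * e = iv (e * f) := by
    refine h.uniq (e * f) (f * e) ?_ ?_
    · have : e * f * (f * e) * (e * f) = e * (f * (f * (e * (e * f)))) := by
        simp only [mul_assoc]
      rw [this, ch hf, ch he, hef']
    · have : f * e * (e * f) * (f * e) = f * (e * (e * (f * (f * e)))) := by
        simp only [mul_assoc]
      rw [this, ch he, ch hf, hfe']
  rw [heq, iv_idem h hef]

lemma idem_aa (h : InvSemi A iv) (a : A) : IsIdempotentElem (a * iv a) := by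
  show a * iv a * (a * iv a) = a * iv a
  rw [mul_assoc a (iv a), ← mul_assoc (iv a), h.ri]

lemma idem_a'a (h : InvSemi A iv) (a : A) : IsIdempotentElem (iv a * a) := by
  show iv a * a * (iv a * a) = iv a * a
  rw [mul_assoc (iv a) a, ← mul_assoc a, h.rr]

lemma iv_ae (h : InvSemi A iv) {e : A} (he : IsIdempotentElem e) (a : A) :
    iv (a * e) = e * iv a := by
  have rrA : ∀ b, a * (iv a * (a * b)) = a * b := fun b => by
    rw [← mul_assoc, ← mul_assoc, h.rr]
  have ri0 : iv a * (a * iv a) = iv a := by rw [← mul_assoc, h.ri]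
  refine (h.uniq (a * e) (e * iv a) ?_ ?_).symm
  · have : a * e * (e * iv a) * (a * e) = a * (e * (e * (iv a * (a * e)))) := by
      simp only [mul_assoc]
    rw [this, ch he, ← mul_assoc (iv a) a e,
      sw (idem_comm h he (idem_a'a h a)), he, mul_assoc (iv a) a e, rrA]
  · have : e * iv a * (a * e) * (e * iv a)
        = e * (iv a * (a * (e * (e * iv a)))) := by simp only [mul_assoc]
    rw [this, ch he, ← mul_assoc (iv a) a,
      sw (idem_comm h he (idem_a'a h a)), ch he,
      sw (idem_comm h (idem_a'a h a) he), mul_assoc (iv a) a (iv a), ri0]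

lemma idem_central (h : InvSemi A iv) (hCl : ∀ a : A, a * iv a = iv a * a)
    {e : A} (he : IsIdempotentElem e) (a : A) : e * a = a * e := by
  have rrA : ∀ b, a * (iv a * (a * b)) = a * b := fun b => by
    rw [← mul_assoc, ← mul_assoc, h.rr]
  have rr0 : a * (iv a * a) = a := by rw [← mul_assoc, h.rr]
  have h1 := hCl (a * e)
  rw [iv_ae h he a] at h1
  have h1' : a * (e * iv a) = e * (iv a * (a * e)) := by
    have l : a * e * (e * iv a) = a * (e * (e * iv a)) := by simp only [mul_assoc]
    have r : e * iv a * (a * e) = e * (iv a * (a * e)) := by simp only [mul_assoc]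
    rw [l, r, ch he] at h1
    exact h1
  have hB : a * (e * iv a) = e * (iv a * a) := by
    rw [h1', ← mul_assoc (iv a) a, idem_comm h (idem_a'a h a) he, ch he]
  have key : a * e = e * a := by
    conv_lhs => rw [← rrA e]
    rw [← mul_assoc (iv a) a e, idem_comm h (idem_a'a h a) he,
      ← mul_assoc e (iv a) a, ← mul_assoc a (e * iv a), hB,
      ← hCl a, mul_assoc e (a * iv a) a, mul_assoc a (iv a) a, rr0]
  exact key.symm

end Helpers

/-- `α(ss⁻¹)λ_s(a) = λ_s(a)`, and `λ_s` is relatively invertible with relative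
inverse `λ̄_s = ξ_{f(s⁻¹,s)⁻¹} ∘ λ_{s⁻¹}` and idempotent `e_{λ_s} = α(s⁻¹s)`. -/
theorem stmt15 {S A : Type*} [Semigroup S] [Semigroup A]
    (ivS : S → S) (ivA : A → A) (hS : InvSemi S ivS) (hA : InvSemi A ivA)
    (hCl : ∀ a : A, a * ivA a = ivA a * a)
    (Λ : TwistedModule S A ivS ivA) (s : S) :
    (∀ a : A, Λ.α (s * ivS s) * Λ.lam s a = Λ.lam s a) ∧
    (∀ a : A,
      ivA (Λ.tf (ivS s) s) * Λ.lam (ivS s) (Λ.lam s a) * Λ.tf (ivS s) s =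
        Λ.α (ivS s * s) * a) ∧
    (∀ a : A,
      Λ.lam s (ivA (Λ.tf (ivS s) s) * Λ.lam (ivS s) a * Λ.tf (ivS s) s) =
        Λ.α (s * ivS s) * a) := by

  have hss : IsIdempotentElem (s * ivS s) := idem_aa hS s
  have hs's : IsIdempotentElem (ivS s * s) := idem_a'a hS s
  have hivs : ivS (ivS s) = s := iv_iv hS s
  have hEi : IsIdempotentElem (Λ.α (ivS s * s)) := Λ.α_idem _ hs's
  have hFi : IsIdempotentElem (Λ.α (s * ivS s)) := Λ.α_idem _ hss
  have hEe : Λ.α (ivS s * s) * Λ.α (ivS s * s) = Λ.α (ivS s * s) := hEi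
  have hFe : Λ.α (s * ivS s) * Λ.α (s * ivS s) = Λ.α (s * ivS s) := hFi
  have harg1 : ivS s * s * ivS s * ivS (ivS s) = ivS s * s := by
    rw [hivs, hS.ri]
  have ht1 : Λ.tf (ivS s) s * ivA (Λ.tf (ivS s) s) = Λ.α (ivS s * s) := by
    have := (Λ.tf_mem (ivS s) s).1; rwa [harg1] at this
  have ht2 : ivA (Λ.tf (ivS s) s) * Λ.tf (ivS s) s = Λ.α (ivS s * s) := by
    have := (Λ.tf_mem (ivS s) s).2; rwa [harg1] at this
  have harg2 : s * ivS s * ivS (ivS s) * ivS s = s * ivS s := by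
    rw [hivs, hS.rr]
  have hT1 : Λ.tf s (ivS s) * ivA (Λ.tf s (ivS s)) = Λ.α (s * ivS s) := by
    have := (Λ.tf_mem s (ivS s)).1; rwa [harg2] at this
  have hT2 : ivA (Λ.tf s (ivS s)) * Λ.tf s (ivS s) = Λ.α (s * ivS s) := by
    have := (Λ.tf_mem s (ivS s)).2; rwa [harg2] at this
  have hlamE : Λ.lam s (Λ.α (ivS s * s)) = Λ.α (s * ivS s) := by
    rw [Λ.ax2 s (ivS s * s) hs's]
    congr 1
    rw [← mul_assoc, hS.rr]
  refine ⟨?_, ?_, ?_⟩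
  · -- part 1
    intro a
    obtain ⟨ψ, e, hψm, he, hψl, hlψ, hψe, hle⟩ := Λ.lam_relinv s
    obtain ⟨e', he', hαe'⟩ := Λ.α_surj e he
    have hse : Λ.lam s e = Λ.α (s * e' * ivS s) := by
      rw [← hαe', Λ.ax2 s e' he']
    have hi : IsIdempotentElem (s * e' * ivS s) := by
      show s * e' * ivS s * (s * e' * ivS s) = s * e' * ivS s
      have : s * e' * ivS s * (s * e' * ivS s)
          = s * (e' * (ivS s * (s * (e' * ivS s)))) := by simp only [mul_assoc]
      rw [this, ← mul_assoc (ivS s) s, sw (idem_comm hS he' hs's), ch he',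
        ← mul_assoc s (ivS s * s), ← mul_assoc s (ivS s) s, hS.rr, mul_assoc]
    have harg : s * ivS s * (s * e' * ivS s) = s * e' * ivS s := by
      rw [← mul_assoc, ← mul_assoc, hS.rr]
    calc Λ.α (s * ivS s) * Λ.lam s a
        = Λ.α (s * ivS s) * (Λ.lam s e * Λ.lam s a) := by rw [(hle a).1]
      _ = Λ.α (s * ivS s) * Λ.α (s * e' * ivS s) * Λ.lam s a := by
          rw [hse, ← mul_assoc]
      _ = Λ.α (s * ivS s * (s * e' * ivS s)) * Λ.lam s a := by
          rw [← Λ.α_mul _ _ hss hi]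
      _ = Λ.α (s * e' * ivS s) * Λ.lam s a := by rw [harg]
      _ = Λ.lam s e * Λ.lam s a := by rw [← hse]
      _ = Λ.lam s a := (hle a).1
  · -- part 2
    intro a
    rw [Λ.ax3 (ivS s) s a, Λ.ax1 _ a hs's]
    have : ivA (Λ.tf (ivS s) s) *
        (Λ.tf (ivS s) s * (Λ.α (ivS s * s) * a) * ivA (Λ.tf (ivS s) s)) *
        Λ.tf (ivS s) s
        = ivA (Λ.tf (ivS s) s) * (Λ.tf (ivS s) s * (Λ.α (ivS s * s) *
          (a * (ivA (Λ.tf (ivS s) s) * Λ.tf (ivS s) s)))) := by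
      simp only [mul_assoc]
    rw [this, ch ht2, ht2, ch hEe, ← idem_central hA hCl hEi a, ch hEe]
  · -- part 3
    intro a
    have hvu : Λ.lam s (ivA (Λ.tf (ivS s) s)) * Λ.lam s (Λ.tf (ivS s) s)
        = Λ.α (s * ivS s) := by rw [← Λ.lam_mul, ht2, hlamE]
    have h5 := Λ.ax5 s (ivS s) s
    have h4a := (Λ.ax4 s (ivS s * s) hs's).1
    have hsred : s * (ivS s * s) = s := by rw [← mul_assoc, hS.rr]
    rw [hsred] at h4a
    have h4b := (Λ.ax4 s (s * ivS s) hss).2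
    rw [hS.rr] at h4b
    rw [h4a, h4b] at h5
    have htE : Λ.tf (ivS s) s * Λ.α (ivS s * s) = Λ.tf (ivS s) s := by
      rw [← ht2, ← mul_assoc, hA.rr]
    have huF : Λ.lam s (Λ.tf (ivS s) s) * Λ.α (s * ivS s)
        = Λ.lam s (Λ.tf (ivS s) s) := by
      rw [← hlamE, ← Λ.lam_mul, htE]
    have hTF : Λ.tf s (ivS s) * Λ.α (s * ivS s) = Λ.tf s (ivS s) := by
      rw [← hT2, ← mul_assoc, hA.rr]
    have hu : Λ.lam s (Λ.tf (ivS s) s) = Λ.tf s (ivS s) := by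
      rw [← huF, h5, hTF]
    have htE' : ivA (Λ.tf (ivS s) s) * Λ.α (ivS s * s)
        = ivA (Λ.tf (ivS s) s) := by
      rw [← ht1, ← mul_assoc, hA.ri]
    have hvF : Λ.lam s (ivA (Λ.tf (ivS s) s)) * Λ.α (s * ivS s)
        = Λ.lam s (ivA (Λ.tf (ivS s) s)) := by
      rw [← hlamE, ← Λ.lam_mul, htE']
    have hFT : Λ.α (s * ivS s) * ivA (Λ.tf s (ivS s))
        = ivA (Λ.tf s (ivS s)) := by
      rw [idem_central hA hCl hFi (ivA (Λ.tf s (ivS s))), ← hT1,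
        ← mul_assoc, hA.ri]
    have hv : Λ.lam s (ivA (Λ.tf (ivS s) s)) = ivA (Λ.tf s (ivS s)) := by
      calc Λ.lam s (ivA (Λ.tf (ivS s) s))
          = Λ.lam s (ivA (Λ.tf (ivS s) s)) * Λ.α (s * ivS s) := hvF.symm
        _ = Λ.lam s (ivA (Λ.tf (ivS s) s)) *
            (Λ.tf s (ivS s) * ivA (Λ.tf s (ivS s))) := by rw [hT1]
        _ = Λ.lam s (ivA (Λ.tf (ivS s) s)) * Λ.tf s (ivS s) *
            ivA (Λ.tf s (ivS s)) := by rw [← mul_assoc]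
        _ = Λ.lam s (ivA (Λ.tf (ivS s) s)) * Λ.lam s (Λ.tf (ivS s) s) *
            ivA (Λ.tf s (ivS s)) := by rw [hu]
        _ = Λ.α (s * ivS s) * ivA (Λ.tf s (ivS s)) := by rw [hvu]
        _ = ivA (Λ.tf s (ivS s)) := hFT
    rw [Λ.lam_mul, Λ.lam_mul, Λ.ax3 s (ivS s) a, Λ.ax1 _ a hss, hu, hv]
    have : ivA (Λ.tf s (ivS s)) *
        (Λ.tf s (ivS s) * (Λ.α (s * ivS s) * a) * ivA (Λ.tf s (ivS s))) *
        Λ.tf s (ivS s)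
        = ivA (Λ.tf s (ivS s)) * (Λ.tf s (ivS s) * (Λ.α (s * ivS s) *
          (a * (ivA (Λ.tf s (ivS s)) * Λ.tf s (ivS s))))) := by
      simp only [mul_assoc]
    rw [this, ch hT2, hT2, ch hFe, ← idem_central hA hCl hFi a, ch hFe]
end

section
/- Let (α, λ, f) be a Sieben twisted S-module structure on a semilattice of groups A, where S is an E-unitary inverse semigroup. If (s,s') and (t,t') lie in the minimum group congruence σ, then α(st(s't')⁻¹) f(s,t) = α(st(s't')⁻¹) f(s',t'). -/
/-- The Sieben normality condition (iv'). -/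
def Sieben {S A : Type*} [Semigroup S] [Semigroup A]
    (ivS : S → S) (ivA : A → A) (Λ : TwistedModule S A ivS ivA) : Prop :=
  ∀ (s e : S), IsIdempotentElem e →
    Λ.tf s e = Λ.α (s * e * ivS s) ∧ Λ.tf e s = Λ.α (e * s * ivS s)

/-- The minimum group congruence σ: `(s,t) ∈ σ` iff `e * s = e * t` for some
idempotent `e`. -/
def sigmaRel {S : Type*} [Semigroup S] (s t : S) : Prop :=
  ∃ e, IsIdempotentElem e ∧ e * s = e * t

/-- `S` is E-unitary: every element above an idempotent in the natural partial
order is an idempotent. -/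
def EUnitary (S : Type*) [Semigroup S] : Prop :=
  ∀ e s : S, IsIdempotentElem e → (∃ f, IsIdempotentElem f ∧ e = f * s) →
    IsIdempotentElem s

section AuxLemmas

variable {M : Type*} [Semigroup M] {iv : M → M}

theorem aux_ic {e : M} (he : IsIdempotentElem e) (x : M) : e * (e * x) = e * x := by
  rw [← mul_assoc, he.eq]

theorem aux_iv_iv (h : InvSemi M iv) (s : M) : iv (iv s) = s :=
  (h.uniq (iv s) s (h.ri s) (h.rr s)).symm

theorem aux_iv_idem (h : InvSemi M iv) {e : M} (he : IsIdempotentElem e) : iv e = e :=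
  (h.uniq e e (by rw [he.eq, he.eq]) (by rw [he.eq, he.eq])).symm

theorem aux_rr' (h : InvSemi M iv) (s : M) : s * (iv s * s) = s := by
  rw [← mul_assoc, h.rr]

theorem aux_ri' (h : InvSemi M iv) (s : M) : iv s * (s * iv s) = iv s := by
  rw [← mul_assoc, h.ri]

theorem aux_idem_congr {a b : M} (hab : a = b) (ha : IsIdempotentElem a) :
    IsIdempotentElem b := hab ▸ ha

theorem aux_idem_mul (h : InvSemi M iv) {e f : M} (he : IsIdempotentElem e)
    (hf : IsIdempotentElem f) : IsIdempotentElem (e * f) := by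
  have h1 : (e*f)*(f*iv (e*f)*e)*(e*f) = e*f := by
    calc (e*f)*(f*iv (e*f)*e)*(e*f)
        = e*(f*(f*(iv (e*f)*(e*(e*f))))) := by simp only [mul_assoc]
      _ = e*(f*(iv (e*f)*(e*f))) := by rw [aux_ic he f, aux_ic hf (iv (e*f)*(e*f))]
      _ = (e*f)*iv (e*f)*(e*f) := by simp only [mul_assoc]
      _ = e*f := h.rr (e*f)
  have h2 : (f*iv (e*f)*e)*(e*f)*(f*iv (e*f)*e) = f*iv (e*f)*e := by
    calc (f*iv (e*f)*e)*(e*f)*(f*iv (e*f)*e)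
        = f*(iv (e*f)*(e*(e*(f*(f*(iv (e*f)*e)))))) := by simp only [mul_assoc]
      _ = f*(iv (e*f)*(e*(f*(iv (e*f)*e)))) := by
          rw [aux_ic he (f*(f*(iv (e*f)*e))), aux_ic hf (iv (e*f)*e)]
      _ = f*(((iv (e*f)*(e*f))*iv (e*f))*e) := by simp only [mul_assoc]
      _ = f*(iv (e*f)*e) := by rw [h.ri (e*f)]
      _ = f*iv (e*f)*e := (mul_assoc _ _ _).symm
  have hx : f*iv (e*f)*e = iv (e*f) := h.uniq (e*f) _ h1 h2
  have hxx : IsIdempotentElem (iv (e*f)) := by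
    show iv (e*f)*iv (e*f) = iv (e*f)
    calc iv (e*f)*iv (e*f) = (f*iv (e*f)*e)*(f*iv (e*f)*e) := by rw [hx]
      _ = f*(((iv (e*f)*(e*f))*iv (e*f))*e) := by simp only [mul_assoc]
      _ = f*(iv (e*f)*e) := by rw [h.ri (e*f)]
      _ = f*iv (e*f)*e := (mul_assoc _ _ _).symm
      _ = iv (e*f) := hx
  have hef : e*f = iv (e*f) := by
    conv_lhs => rw [← aux_iv_iv h (e*f), aux_iv_idem h hxx]
  show (e*f)*(e*f) = e*f
  rw [hef]
  exact hxx.eq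

theorem aux_idem_comm (h : InvSemi M iv) {e f : M} (he : IsIdempotentElem e)
    (hf : IsIdempotentElem f) : e * f = f * e := by
  have hef := aux_idem_mul h he hf
  have hfe := aux_idem_mul h hf he
  have h1 : (e*f)*(f*e)*(e*f) = e*f := by
    calc (e*f)*(f*e)*(e*f) = e*(f*(f*(e*(e*f)))) := by simp only [mul_assoc]
      _ = e*(f*(e*f)) := by rw [aux_ic hf (e*(e*f)), aux_ic he f]
      _ = (e*f)*(e*f) := by simp only [mul_assoc]
      _ = e*f := hef.eq
  have h2 : (f*e)*(e*f)*(f*e) = f*e := by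
    calc (f*e)*(e*f)*(f*e) = f*(e*(e*(f*(f*e)))) := by simp only [mul_assoc]
      _ = f*(e*(f*e)) := by rw [aux_ic he (f*(f*e)), aux_ic hf e]
      _ = (f*e)*(f*e) := by simp only [mul_assoc]
      _ = f*e := hfe.eq
  have hu := h.uniq (e*f) (f*e) h1 h2
  rw [hu, aux_iv_idem h hef]

theorem aux_swap (h : InvSemi M iv) {p q : M} (hp : IsIdempotentElem p)
    (hq : IsIdempotentElem q) (x : M) : p * (q * x) = q * (p * x) := by
  rw [← mul_assoc, aux_idem_comm h hp hq, mul_assoc]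

theorem aux_idem_mul_iv (h : InvSemi M iv) (s : M) : IsIdempotentElem (s * iv s) := by
  show (s*iv s)*(s*iv s) = s*iv s
  calc (s*iv s)*(s*iv s) = s*((iv s*s)*iv s) := by simp only [mul_assoc]
    _ = s*iv s := by rw [h.ri]

theorem aux_idem_iv_mul (h : InvSemi M iv) (s : M) : IsIdempotentElem (iv s * s) := by
  show (iv s*s)*(iv s*s) = iv s*s
  calc (iv s*s)*(iv s*s) = iv s*((s*iv s)*s) := by simp only [mul_assoc]
    _ = iv s*s := by rw [h.rr]

theorem aux_iv_mul (h : InvSemi M iv) (s t : M) : iv (s * t) = iv t * iv s := by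
  refine (h.uniq (s*t) (iv t*iv s) ?_ ?_).symm
  · calc (s*t)*(iv t*iv s)*(s*t) = s*((t*iv t)*(iv s*s))*t := by simp only [mul_assoc]
      _ = s*((iv s*s)*(t*iv t))*t := by
          rw [aux_idem_comm h (aux_idem_mul_iv h t) (aux_idem_iv_mul h s)]
      _ = (s*iv s*s)*(t*iv t*t) := by simp only [mul_assoc]
      _ = s*t := by rw [h.rr, h.rr]
  · calc (iv t*iv s)*(s*t)*(iv t*iv s) = iv t*((iv s*s)*(t*iv t))*iv s := by
          simp only [mul_assoc]
      _ = iv t*((t*iv t)*(iv s*s))*iv s := by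
          rw [aux_idem_comm h (aux_idem_iv_mul h s) (aux_idem_mul_iv h t)]
      _ = (iv t*t*iv t)*(iv s*s*iv s) := by simp only [mul_assoc]
      _ = iv t*iv s := by rw [h.ri, h.ri]

theorem aux_idem_conj (h : InvSemi M iv) {e : M} (he : IsIdempotentElem e) (s : M) :
    IsIdempotentElem (s * e * iv s) := by
  show (s*e*iv s)*(s*e*iv s) = s*e*iv s
  calc (s*e*iv s)*(s*e*iv s) = s*(e*((iv s*s)*(e*iv s))) := by simp only [mul_assoc]
    _ = s*((iv s*s)*(e*(e*iv s))) := by rw [aux_swap h he (aux_idem_iv_mul h s) (e*iv s)]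
    _ = s*((iv s*s)*(e*iv s)) := by rw [aux_ic he (iv s)]
    _ = (s*(iv s*s))*(e*iv s) := by simp only [mul_assoc]
    _ = s*(e*iv s) := by rw [aux_rr' h s]
    _ = s*e*iv s := (mul_assoc _ _ _).symm

theorem aux_gug (h : InvSemi M iv) {u v : M} (hg : IsIdempotentElem (u * iv v)) :
    (u * iv v) * u = (u * iv v) * v := by
  have hvu : v * iv u = u * iv v := by
    have h1 := aux_iv_idem h hg
    rw [aux_iv_mul h u (iv v), aux_iv_iv h v] at h1
    exact h1
  calc (u*iv v)*u = ((u*iv v)*(u*iv v))*u := by rw [hg.eq]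
    _ = ((u*iv v)*(v*iv u))*u := by rw [hvu]
    _ = u*((iv v*v)*(iv u*u)) := by simp only [mul_assoc]
    _ = u*((iv u*u)*(iv v*v)) := by
        rw [aux_idem_comm h (aux_idem_iv_mul h v) (aux_idem_iv_mul h u)]
    _ = (u*(iv u*u))*(iv v*v) := by simp only [mul_assoc]
    _ = u*(iv v*v) := by rw [aux_rr' h u]
    _ = (u*iv v)*v := by rw [mul_assoc]

/-- In a Clifford (inverse) semigroup, idempotents are central. -/
theorem aux_central (h : InvSemi M iv) (hCl : ∀ a : M, a * iv a = iv a * a)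
    {e : M} (he : IsIdempotentElem e) (a : M) : e * a = a * e := by
  have h1 : a*(e*iv a) = e*(iv a*a) := by
    have hc := hCl (a*e)
    rw [aux_iv_mul h a e, aux_iv_idem h he] at hc
    calc a*(e*iv a) = (a*e)*(e*iv a) := by
          simp only [mul_assoc]; rw [aux_ic he (iv a)]
      _ = (e*iv a)*(a*e) := hc
      _ = e*((iv a*a)*e) := by simp only [mul_assoc]
      _ = e*(e*(iv a*a)) := by rw [aux_idem_comm h (aux_idem_iv_mul h a) he]
      _ = e*(iv a*a) := aux_ic he _
  have h3 : (a*(e*iv a))*a = a*e := by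
    calc (a*(e*iv a))*a = a*(e*(iv a*a)) := by simp only [mul_assoc]
      _ = a*((iv a*a)*e) := by rw [aux_idem_comm h he (aux_idem_iv_mul h a)]
      _ = (a*(iv a*a))*e := by simp only [mul_assoc]
      _ = a*e := by rw [aux_rr' h a]
  have h4 : (a*(e*iv a))*a = e*a := by
    calc (a*(e*iv a))*a = (e*(iv a*a))*a := by rw [h1]
      _ = e*((iv a*a)*a) := mul_assoc _ _ _
      _ = e*((a*iv a)*a) := by rw [← hCl a]
      _ = e*a := by rw [h.rr a]
  exact h4.symm.trans h3

end AuxLemmas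

/-- Main working lemma: if `e, c, G` are idempotents with the listed absorption
properties, then `α(G) f(s,t) = α(G) f(es, ct)`. -/
theorem claim_aux {S A : Type*} [Semigroup S] [Semigroup A]
    (ivS : S → S) (ivA : A → A) (hS : InvSemi S ivS) (hA : InvSemi A ivA)
    (hCl : ∀ a : A, a * ivA a = ivA a * a)
    (Λ : TwistedModule S A ivS ivA) (hSieb : Sieben ivS ivA Λ)
    (e c G s t : S) (he : IsIdempotentElem e) (hc : IsIdempotentElem c)
    (hg : IsIdempotentElem G)
    (habs : c * (t * ivS t) = c)
    (hGe : G * e = G) (hGss : G * (s * ivS s) = G)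
    (hGsfs : G * (s * c * ivS s) = G)
    (hGstt : G * (s * (t * ivS t) * ivS s) = G) :
    Λ.α G * Λ.tf s t = Λ.α G * Λ.tf (e * s) (c * t) := by
  have hP : IsIdempotentElem (e*(s*t)*ivS (s*t)) :=
    aux_idem_congr (mul_assoc e (s*t) (ivS (s*t))).symm
      (aux_idem_mul hS he (aux_idem_mul_iv hS (s*t)))
  have hQ : IsIdempotentElem ((e*s)*ivS s) :=
    aux_idem_congr (mul_assoc e s (ivS s)).symm
      (aux_idem_mul hS he (aux_idem_mul_iv hS s))
  have hV : IsIdempotentElem ((e*s)*c*ivS (e*s)) := aux_idem_conj hS hc (e*s)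
  have hu' : IsIdempotentElem (ivS t*c*t) :=
    aux_idem_congr (by rw [aux_iv_iv hS t]) (aux_idem_conj hS hc (ivS t))
  have haP := Λ.α_idem _ hP
  have haQ := Λ.α_idem _ hQ
  have haV := Λ.α_idem _ hV
  -- identity (3): localization of the first argument
  have heP : e*(e*(s*t)*ivS (s*t)) = e*(s*t)*ivS (s*t) := by
    simp only [mul_assoc]; rw [aux_ic he (s*(t*ivS (s*t)))]
  have L1 : Λ.α (e*(s*t)*ivS (s*t)) * Λ.tf s t
      = Λ.α (e*s*ivS s) * Λ.tf (e*s) t := by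
    have h5 := Λ.ax5 e s t
    rw [Λ.ax1 e (Λ.tf s t) he, (hSieb (s*t) e he).2, (hSieb s e he).2] at h5
    have hmove : Λ.α e * Λ.tf s t * Λ.α (e*(s*t)*ivS (s*t))
        = Λ.α (e*(s*t)*ivS (s*t)) * Λ.tf s t := by
      calc Λ.α e * Λ.tf s t * Λ.α (e*(s*t)*ivS (s*t))
          = Λ.α e * (Λ.tf s t * Λ.α (e*(s*t)*ivS (s*t))) := mul_assoc _ _ _
        _ = Λ.α e * (Λ.α (e*(s*t)*ivS (s*t)) * Λ.tf s t) := by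
            rw [aux_central hA hCl haP (Λ.tf s t)]
        _ = (Λ.α e * Λ.α (e*(s*t)*ivS (s*t))) * Λ.tf s t := (mul_assoc _ _ _).symm
        _ = Λ.α (e*(e*(s*t)*ivS (s*t))) * Λ.tf s t := by rw [Λ.α_mul e _ he hP]
        _ = Λ.α (e*(s*t)*ivS (s*t)) * Λ.tf s t := by rw [heP]
    exact hmove.symm.trans h5
  -- simplifications around u' = t⁻¹ c t
  have hsimp : t*(ivS t*c*t)*ivS t = c := by
    calc t*(ivS t*c*t)*ivS t = (t*ivS t)*(c*(t*ivS t)) := by simp only [mul_assoc]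
      _ = c*((t*ivS t)*(t*ivS t)) := aux_swap hS (aux_idem_mul_iv hS t) hc (t*ivS t)
      _ = c*(t*ivS t) := by rw [(aux_idem_mul_iv hS t).eq]
      _ = c := habs
  have htu : t*(ivS t*c*t) = c*t := by
    calc t*(ivS t*c*t) = ((t*ivS t)*c)*t := by simp only [mul_assoc]
      _ = (c*(t*ivS t))*t := by rw [aux_idem_comm hS (aux_idem_mul_iv hS t) hc]
      _ = c*t := by rw [habs]
  have hVW : (e*s)*c*ivS (e*s) = ((e*s)*t)*(ivS t*c*t)*ivS ((e*s)*t) := by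
    rw [aux_iv_mul hS (e*s) t]
    calc (e*s)*c*ivS (e*s) = (e*s)*(t*(ivS t*c*t)*ivS t)*ivS (e*s) := by rw [hsimp]
      _ = ((e*s)*t)*(ivS t*c*t)*(ivS t*ivS (e*s)) := by simp only [mul_assoc]
  -- identity (1): localization of the second argument
  have L2 : Λ.α ((e*s)*c*ivS (e*s)) * Λ.tf (e*s) (c*t)
      = Λ.α ((e*s)*c*ivS (e*s)) * Λ.tf (e*s) t := by
    have h5 := Λ.ax5 (e*s) t (ivS t*c*t)
    rw [(hSieb t (ivS t*c*t) hu').1] at h5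
    rw [hsimp] at h5
    rw [Λ.ax2 (e*s) c hc] at h5
    rw [(hSieb ((e*s)*t) (ivS t*c*t) hu').1] at h5
    rw [← hVW] at h5
    rw [htu] at h5
    rw [← aux_central hA hCl haV (Λ.tf (e*s) t)] at h5
    exact h5
  -- folding facts
  have hPsplit : (s*t)*ivS (s*t) = s*(t*ivS t)*ivS s := by
    rw [aux_iv_mul hS s t]; simp only [mul_assoc]
  have hGP : G*(e*(s*t)*ivS (s*t)) = G := by
    calc G*(e*(s*t)*ivS (s*t)) = (G*e)*((s*t)*ivS (s*t)) := by simp only [mul_assoc]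
      _ = G*((s*t)*ivS (s*t)) := by rw [hGe]
      _ = G*(s*(t*ivS t)*ivS s) := by rw [hPsplit]
      _ = G := hGstt
  have hGQ : G*((e*s)*ivS s) = G := by
    calc G*((e*s)*ivS s) = (G*e)*(s*ivS s) := by simp only [mul_assoc]
      _ = G*(s*ivS s) := by rw [hGe]
      _ = G := hGss
  have hVsplit : (e*s)*c*ivS (e*s) = e*((s*c*ivS s)*e) := by
    rw [aux_iv_mul hS e s, aux_iv_idem hS he]; simp only [mul_assoc]
  have hGV : G*((e*s)*c*ivS (e*s)) = G := by
    rw [hVsplit]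
    calc G*(e*((s*c*ivS s)*e)) = ((G*e)*(s*c*ivS s))*e := by simp only [mul_assoc]
      _ = (G*(s*c*ivS s))*e := by rw [hGe]
      _ = G*e := by rw [hGsfs]
      _ = G := hGe
  have fP : Λ.α G * Λ.α (e*(s*t)*ivS (s*t)) = Λ.α G := by
    rw [← Λ.α_mul G _ hg hP, hGP]
  have fQ : Λ.α G * Λ.α ((e*s)*ivS s) = Λ.α G := by
    rw [← Λ.α_mul G _ hg hQ, hGQ]
  have fV : Λ.α G * Λ.α ((e*s)*c*ivS (e*s)) = Λ.α G := by
    rw [← Λ.α_mul G _ hg hV, hGV]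
  have swapA : ∀ x : A, Λ.α ((e*s)*c*ivS (e*s)) * (Λ.α ((e*s)*ivS s) * x)
      = Λ.α ((e*s)*ivS s) * (Λ.α ((e*s)*c*ivS (e*s)) * x) := fun x => by
    rw [← mul_assoc, aux_central hA hCl haV (Λ.α ((e*s)*ivS s)), mul_assoc]
  -- assembly
  calc Λ.α G * Λ.tf s t
      = (Λ.α G * Λ.α (e*(s*t)*ivS (s*t))) * Λ.tf s t := by rw [fP]
    _ = ((Λ.α G * Λ.α ((e*s)*c*ivS (e*s))) * Λ.α (e*(s*t)*ivS (s*t))) * Λ.tf s t := by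
        rw [fV]
    _ = Λ.α G * (Λ.α ((e*s)*c*ivS (e*s)) * (Λ.α (e*(s*t)*ivS (s*t)) * Λ.tf s t)) := by
        simp only [mul_assoc]
    _ = Λ.α G * (Λ.α ((e*s)*c*ivS (e*s)) * (Λ.α (e*s*ivS s) * Λ.tf (e*s) t)) := by
        rw [L1]
    _ = Λ.α G * (Λ.α ((e*s)*ivS s) * (Λ.α ((e*s)*c*ivS (e*s)) * Λ.tf (e*s) t)) := by
        rw [swapA]
    _ = Λ.α G * (Λ.α ((e*s)*ivS s) * (Λ.α ((e*s)*c*ivS (e*s)) * Λ.tf (e*s) (c*t))) := by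
        rw [L2]
    _ = (Λ.α G * Λ.α ((e*s)*ivS s)) * (Λ.α ((e*s)*c*ivS (e*s)) * Λ.tf (e*s) (c*t)) := by
        simp only [mul_assoc]
    _ = Λ.α G * (Λ.α ((e*s)*c*ivS (e*s)) * Λ.tf (e*s) (c*t)) := by rw [fQ]
    _ = (Λ.α G * Λ.α ((e*s)*c*ivS (e*s))) * Λ.tf (e*s) (c*t) := (mul_assoc _ _ _).symm
    _ = Λ.α G * Λ.tf (e*s) (c*t) := by rw [fV]

set_option maxHeartbeats 1600000 in
/-- For a Sieben twisted module over an E-unitary `S`: if `(s,s')` and `(t,t')`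
are σ-related, then `α(st(s't')⁻¹) f(s,t) = α(st(s't')⁻¹) f(s',t')`. -/
theorem stmt17 {S A : Type*} [Semigroup S] [Semigroup A]
    (ivS : S → S) (ivA : A → A) (hS : InvSemi S ivS) (hA : InvSemi A ivA)
    (hCl : ∀ a : A, a * ivA a = ivA a * a) (hE : EUnitary S)
    (Λ : TwistedModule S A ivS ivA) (hSieb : Sieben ivS ivA Λ)
    (s s' t t' : S) (hs : sigmaRel s s') (ht : sigmaRel t t') :
    Λ.α (s * t * ivS (s' * t')) * Λ.tf s t =
      Λ.α (s * t * ivS (s' * t')) * Λ.tf s' t' := by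
  obtain ⟨e₀, he₀, hs0⟩ := hs
  obtain ⟨f₀, hf₀, ht0⟩ := ht
  -- e := s * (s')⁻¹ is idempotent (E-unitarity)
  have he : IsIdempotentElem (s * ivS s') := by
    refine hE (e₀*(s*ivS s')) (s*ivS s') ?_ ⟨e₀, he₀, rfl⟩
    have h1 : e₀*(s*ivS s') = e₀*(s'*ivS s') := by
      rw [← mul_assoc, hs0, mul_assoc]
    rw [h1]
    exact aux_idem_mul hS he₀ (aux_idem_mul_iv hS s')
  have hc : IsIdempotentElem (t * ivS t') := by
    refine hE (f₀*(t*ivS t')) (t*ivS t') ?_ ⟨f₀, hf₀, rfl⟩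
    have h1 : f₀*(t*ivS t') = f₀*(t'*ivS t') := by
      rw [← mul_assoc, ht0, mul_assoc]
    rw [h1]
    exact aux_idem_mul hS hf₀ (aux_idem_mul_iv hS t')
  have hes : (s*ivS s')*s = (s*ivS s')*s' := aux_gug hS he
  have hct : (t*ivS t')*t = (t*ivS t')*t' := aux_gug hS hc
  -- G := (st) * (s't')⁻¹ is idempotent (E-unitarity again)
  have hh1 : IsIdempotentElem ((s*ivS s')*(s*(t*ivS t')*ivS s)) :=
    aux_idem_mul hS he (aux_idem_conj hS hc s)
  have hh2 : IsIdempotentElem ((s*ivS s')*(s'*(t*ivS t')*ivS s')) :=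
    aux_idem_mul hS he (aux_idem_conj hS hc s')
  have F1 : ((s*ivS s')*(s*(t*ivS t')*ivS s))*(s*t) = (s*ivS s')*(s*((t*ivS t')*t)) := by
    calc ((s*ivS s')*(s*(t*ivS t')*ivS s))*(s*t)
        = (s*ivS s')*(s*((t*ivS t')*((ivS s*s)*t))) := by simp only [mul_assoc]
      _ = (s*ivS s')*(s*((ivS s*s)*((t*ivS t')*t))) := by
          rw [aux_swap hS hc (aux_idem_iv_mul hS s) t]
      _ = (s*ivS s')*((s*(ivS s*s))*((t*ivS t')*t)) := by simp only [mul_assoc]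
      _ = (s*ivS s')*(s*((t*ivS t')*t)) := by rw [aux_rr' hS s]
  have F2 : ((s*ivS s')*(s'*(t*ivS t')*ivS s'))*(s'*t')
      = (s*ivS s')*(s'*((t*ivS t')*t')) := by
    calc ((s*ivS s')*(s'*(t*ivS t')*ivS s'))*(s'*t')
        = (s*ivS s')*(s'*((t*ivS t')*((ivS s'*s')*t'))) := by simp only [mul_assoc]
      _ = (s*ivS s')*(s'*((ivS s'*s')*((t*ivS t')*t'))) := by
          rw [aux_swap hS hc (aux_idem_iv_mul hS s') t']
      _ = (s*ivS s')*((s'*(ivS s'*s'))*((t*ivS t')*t')) := by simp only [mul_assoc]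
      _ = (s*ivS s')*(s'*((t*ivS t')*t')) := by rw [aux_rr' hS s']
  have mid : (s*ivS s')*(s*((t*ivS t')*t)) = (s*ivS s')*(s'*((t*ivS t')*t')) := by
    calc (s*ivS s')*(s*((t*ivS t')*t)) = ((s*ivS s')*s)*((t*ivS t')*t) :=
          (mul_assoc _ _ _).symm
      _ = ((s*ivS s')*s')*((t*ivS t')*t') := by rw [hes, hct]
      _ = (s*ivS s')*(s'*((t*ivS t')*t')) := mul_assoc _ _ _
  have hEidem : IsIdempotentElem
      (((s*ivS s')*(s*(t*ivS t')*ivS s))*((s*ivS s')*(s'*(t*ivS t')*ivS s'))) :=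
    aux_idem_mul hS hh1 hh2
  have hE1a : (((s*ivS s')*(s*(t*ivS t')*ivS s))*((s*ivS s')*(s'*(t*ivS t')*ivS s')))*(s*t)
      = (s*ivS s')*(s*((t*ivS t')*t)) := by
    calc (((s*ivS s')*(s*(t*ivS t')*ivS s))*((s*ivS s')*(s'*(t*ivS t')*ivS s')))*(s*t)
        = (((s*ivS s')*(s'*(t*ivS t')*ivS s'))*((s*ivS s')*(s*(t*ivS t')*ivS s)))*(s*t) := by
          rw [aux_idem_comm hS hh1 hh2]
      _ = ((s*ivS s')*(s'*(t*ivS t')*ivS s'))*(((s*ivS s')*(s*(t*ivS t')*ivS s))*(s*t)) :=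
          mul_assoc _ _ _
      _ = ((s*ivS s')*(s'*(t*ivS t')*ivS s'))*((s*ivS s')*(s*((t*ivS t')*t))) := by rw [F1]
      _ = ((s*ivS s')*(s'*(t*ivS t')*ivS s'))*((s*ivS s')*(s'*((t*ivS t')*t'))) := by
          rw [mid]
      _ = ((s*ivS s')*(s'*(t*ivS t')*ivS s'))
          *(((s*ivS s')*(s'*(t*ivS t')*ivS s'))*(s'*t')) := by rw [F2]
      _ = ((s*ivS s')*(s'*(t*ivS t')*ivS s'))*(s'*t') := aux_ic hh2 _
      _ = (s*ivS s')*(s'*((t*ivS t')*t')) := F2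
      _ = (s*ivS s')*(s*((t*ivS t')*t)) := mid.symm
  have hE1b : (((s*ivS s')*(s*(t*ivS t')*ivS s))*((s*ivS s')*(s'*(t*ivS t')*ivS s')))*(s'*t')
      = (s*ivS s')*(s*((t*ivS t')*t)) := by
    calc (((s*ivS s')*(s*(t*ivS t')*ivS s))*((s*ivS s')*(s'*(t*ivS t')*ivS s')))*(s'*t')
        = ((s*ivS s')*(s*(t*ivS t')*ivS s))*(((s*ivS s')*(s'*(t*ivS t')*ivS s'))*(s'*t')) :=
          mul_assoc _ _ _
      _ = ((s*ivS s')*(s*(t*ivS t')*ivS s))*((s*ivS s')*(s'*((t*ivS t')*t'))) := by rw [F2]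
      _ = ((s*ivS s')*(s*(t*ivS t')*ivS s))*((s*ivS s')*(s*((t*ivS t')*t))) := by
          rw [← mid]
      _ = ((s*ivS s')*(s*(t*ivS t')*ivS s))*(((s*ivS s')*(s*(t*ivS t')*ivS s))*(s*t)) := by
          rw [F1]
      _ = ((s*ivS s')*(s*(t*ivS t')*ivS s))*(s*t) := aux_ic hh1 _
      _ = (s*ivS s')*(s*((t*ivS t')*t)) := F1
  have hE1 := hE1a.trans hE1b.symm
  have hg : IsIdempotentElem ((s*t)*ivS (s'*t')) := by
    refine hE ((((s*ivS s')*(s*(t*ivS t')*ivS s))*((s*ivS s')*(s'*(t*ivS t')*ivS s')))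
      *((s*t)*ivS (s'*t'))) ((s*t)*ivS (s'*t')) ?_ ⟨_, hEidem, rfl⟩
    have hE2 : (((s*ivS s')*(s*(t*ivS t')*ivS s))*((s*ivS s')*(s'*(t*ivS t')*ivS s')))
        *((s*t)*ivS (s'*t'))
        = (((s*ivS s')*(s*(t*ivS t')*ivS s))*((s*ivS s')*(s'*(t*ivS t')*ivS s')))
          *((s'*t')*ivS (s'*t')) := by
      calc (((s*ivS s')*(s*(t*ivS t')*ivS s))*((s*ivS s')*(s'*(t*ivS t')*ivS s')))
          *((s*t)*ivS (s'*t'))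
          = ((((s*ivS s')*(s*(t*ivS t')*ivS s))*((s*ivS s')*(s'*(t*ivS t')*ivS s')))
            *(s*t))*ivS (s'*t') := (mul_assoc _ _ _).symm
        _ = ((((s*ivS s')*(s*(t*ivS t')*ivS s))*((s*ivS s')*(s'*(t*ivS t')*ivS s')))
            *(s'*t'))*ivS (s'*t') := by rw [hE1]
        _ = (((s*ivS s')*(s*(t*ivS t')*ivS s))*((s*ivS s')*(s'*(t*ivS t')*ivS s')))
            *((s'*t')*ivS (s'*t')) := mul_assoc _ _ _
    rw [hE2]
    exact aux_idem_mul hS hEidem (aux_idem_mul_iv hS (s'*t'))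
  -- the two useful forms of G
  have gf1 : (s*t)*ivS (s'*t') = s*((t*ivS t')*ivS s') := by
    rw [aux_iv_mul hS s' t']; simp only [mul_assoc]
  have gf2 : (s*t)*ivS (s'*t') = s'*((t*ivS t')*ivS s) := by
    calc (s*t)*ivS (s'*t') = ivS ((s*t)*ivS (s'*t')) := (aux_iv_idem hS hg).symm
      _ = ivS (s*((t*ivS t')*ivS s')) := by rw [gf1]
      _ = ivS ((t*ivS t')*ivS s')*ivS s := aux_iv_mul hS _ _
      _ = (ivS (ivS s')*ivS (t*ivS t'))*ivS s := by
          rw [aux_iv_mul hS (t*ivS t') (ivS s')]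
      _ = (s'*(t*ivS t'))*ivS s := by rw [aux_iv_iv hS s', aux_iv_idem hS hc]
      _ = s'*((t*ivS t')*ivS s) := mul_assoc _ _ _
  -- absorption facts for c
  have habs : (t*ivS t')*(t*ivS t) = t*ivS t' := by
    calc (t*ivS t')*(t*ivS t) = (t*ivS t)*(t*ivS t') :=
          aux_idem_comm hS hc (aux_idem_mul_iv hS t)
      _ = ((t*ivS t)*t)*ivS t' := (mul_assoc _ _ _).symm
      _ = t*ivS t' := by rw [hS.rr]
  have habs' : (t*ivS t')*(t'*ivS t') = t*ivS t' := by
    calc (t*ivS t')*(t'*ivS t') = t*(ivS t'*(t'*ivS t')) := by simp only [mul_assoc]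
      _ = t*ivS t' := by rw [aux_ri' hS t']
  -- atomic absorption facts for G
  have l_e : (s*ivS s')*((s*t)*ivS (s'*t')) = (s*t)*ivS (s'*t') := by
    calc (s*ivS s')*((s*t)*ivS (s'*t'))
        = (s*ivS s')*(s*((t*ivS t')*ivS s')) := by rw [gf1]
      _ = ((s*ivS s')*s)*((t*ivS t')*ivS s') := (mul_assoc _ _ _).symm
      _ = ((s*ivS s')*s')*((t*ivS t')*ivS s') := by rw [hes]
      _ = s*((ivS s'*s')*((t*ivS t')*ivS s')) := by simp only [mul_assoc]
      _ = s*((t*ivS t')*((ivS s'*s')*ivS s')) := by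
          rw [aux_swap hS (aux_idem_iv_mul hS s') hc (ivS s')]
      _ = s*((t*ivS t')*ivS s') := by rw [hS.ri s']
      _ = (s*t)*ivS (s'*t') := gf1.symm
  have l_ss : (s*ivS s)*((s*t)*ivS (s'*t')) = (s*t)*ivS (s'*t') := by
    calc (s*ivS s)*((s*t)*ivS (s'*t'))
        = (s*ivS s)*(s*((t*ivS t')*ivS s')) := by rw [gf1]
      _ = ((s*ivS s)*s)*((t*ivS t')*ivS s') := (mul_assoc _ _ _).symm
      _ = s*((t*ivS t')*ivS s') := by rw [hS.rr]
      _ = (s*t)*ivS (s'*t') := gf1.symm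
  have l_s's' : (s'*ivS s')*((s*t)*ivS (s'*t')) = (s*t)*ivS (s'*t') := by
    calc (s'*ivS s')*((s*t)*ivS (s'*t'))
        = (s'*ivS s')*(s'*((t*ivS t')*ivS s)) := by rw [gf2]
      _ = ((s'*ivS s')*s')*((t*ivS t')*ivS s) := (mul_assoc _ _ _).symm
      _ = s'*((t*ivS t')*ivS s) := by rw [hS.rr]
      _ = (s*t)*ivS (s'*t') := gf2.symm
  have l_sfs : (s*(t*ivS t')*ivS s)*((s*t)*ivS (s'*t')) = (s*t)*ivS (s'*t') := by
    calc (s*(t*ivS t')*ivS s)*((s*t)*ivS (s'*t'))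
        = (s*(t*ivS t')*ivS s)*(s*((t*ivS t')*ivS s')) := by rw [gf1]
      _ = s*((t*ivS t')*((ivS s*s)*((t*ivS t')*ivS s'))) := by simp only [mul_assoc]
      _ = s*((ivS s*s)*((t*ivS t')*((t*ivS t')*ivS s'))) := by
          rw [aux_swap hS hc (aux_idem_iv_mul hS s) ((t*ivS t')*ivS s')]
      _ = s*((ivS s*s)*((t*ivS t')*ivS s')) := by rw [aux_ic hc (ivS s')]
      _ = (s*(ivS s*s))*((t*ivS t')*ivS s') := by simp only [mul_assoc]
      _ = s*((t*ivS t')*ivS s') := by rw [aux_rr' hS s]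
      _ = (s*t)*ivS (s'*t') := gf1.symm
  have l_s'fs' : (s'*(t*ivS t')*ivS s')*((s*t)*ivS (s'*t')) = (s*t)*ivS (s'*t') := by
    calc (s'*(t*ivS t')*ivS s')*((s*t)*ivS (s'*t'))
        = (s'*(t*ivS t')*ivS s')*(s'*((t*ivS t')*ivS s)) := by rw [gf2]
      _ = s'*((t*ivS t')*((ivS s'*s')*((t*ivS t')*ivS s))) := by simp only [mul_assoc]
      _ = s'*((ivS s'*s')*((t*ivS t')*((t*ivS t')*ivS s))) := by
          rw [aux_swap hS hc (aux_idem_iv_mul hS s') ((t*ivS t')*ivS s)]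
      _ = s'*((ivS s'*s')*((t*ivS t')*ivS s)) := by rw [aux_ic hc (ivS s)]
      _ = (s'*(ivS s'*s'))*((t*ivS t')*ivS s) := by simp only [mul_assoc]
      _ = s'*((t*ivS t')*ivS s) := by rw [aux_rr' hS s']
      _ = (s*t)*ivS (s'*t') := gf2.symm
  have l_stt : (s*(t*ivS t)*ivS s)*((s*t)*ivS (s'*t')) = (s*t)*ivS (s'*t') := by
    calc (s*(t*ivS t)*ivS s)*((s*t)*ivS (s'*t'))
        = (s*(t*ivS t)*ivS s)*(s*((t*ivS t')*ivS s')) := by rw [gf1]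
      _ = s*((t*ivS t)*((ivS s*s)*((t*ivS t')*ivS s'))) := by simp only [mul_assoc]
      _ = s*((ivS s*s)*((t*ivS t)*((t*ivS t')*ivS s'))) := by
          rw [aux_swap hS (aux_idem_mul_iv hS t) (aux_idem_iv_mul hS s)
            ((t*ivS t')*ivS s')]
      _ = (s*(ivS s*s))*((t*ivS t)*((t*ivS t')*ivS s')) := by simp only [mul_assoc]
      _ = s*((t*ivS t)*((t*ivS t')*ivS s')) := by rw [aux_rr' hS s]
      _ = s*(((t*ivS t)*(t*ivS t'))*ivS s') := by simp only [mul_assoc]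
      _ = s*(((t*ivS t')*(t*ivS t))*ivS s') := by
          rw [aux_idem_comm hS (aux_idem_mul_iv hS t) hc]
      _ = s*((t*ivS t')*ivS s') := by rw [habs]
      _ = (s*t)*ivS (s'*t') := gf1.symm
  have l_s't't' : (s'*(t'*ivS t')*ivS s')*((s*t)*ivS (s'*t')) = (s*t)*ivS (s'*t') := by
    calc (s'*(t'*ivS t')*ivS s')*((s*t)*ivS (s'*t'))
        = (s'*(t'*ivS t')*ivS s')*(s'*((t*ivS t')*ivS s)) := by rw [gf2]
      _ = s'*((t'*ivS t')*((ivS s'*s')*((t*ivS t')*ivS s))) := by simp only [mul_assoc]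
      _ = s'*((ivS s'*s')*((t'*ivS t')*((t*ivS t')*ivS s))) := by
          rw [aux_swap hS (aux_idem_mul_iv hS t') (aux_idem_iv_mul hS s')
            ((t*ivS t')*ivS s)]
      _ = (s'*(ivS s'*s'))*((t'*ivS t')*((t*ivS t')*ivS s)) := by simp only [mul_assoc]
      _ = s'*((t'*ivS t')*((t*ivS t')*ivS s)) := by rw [aux_rr' hS s']
      _ = s'*(((t'*ivS t')*(t*ivS t'))*ivS s) := by simp only [mul_assoc]
      _ = s'*(((t*ivS t')*(t'*ivS t'))*ivS s) := by
          rw [aux_idem_comm hS (aux_idem_mul_iv hS t') hc]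
      _ = s'*((t*ivS t')*ivS s) := by rw [habs']
      _ = (s*t)*ivS (s'*t') := gf2.symm
  -- absorption facts in the form needed by claim_aux
  have hGe : ((s*t)*ivS (s'*t'))*(s*ivS s') = (s*t)*ivS (s'*t') :=
    (aux_idem_comm hS hg he).trans l_e
  have hGss : ((s*t)*ivS (s'*t'))*(s*ivS s) = (s*t)*ivS (s'*t') :=
    (aux_idem_comm hS hg (aux_idem_mul_iv hS s)).trans l_ss
  have hGs's' : ((s*t)*ivS (s'*t'))*(s'*ivS s') = (s*t)*ivS (s'*t') :=
    (aux_idem_comm hS hg (aux_idem_mul_iv hS s')).trans l_s's'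
  have hGsfs : ((s*t)*ivS (s'*t'))*(s*(t*ivS t')*ivS s) = (s*t)*ivS (s'*t') :=
    (aux_idem_comm hS hg (aux_idem_conj hS hc s)).trans l_sfs
  have hGs'fs' : ((s*t)*ivS (s'*t'))*(s'*(t*ivS t')*ivS s') = (s*t)*ivS (s'*t') :=
    (aux_idem_comm hS hg (aux_idem_conj hS hc s')).trans l_s'fs'
  have hGstt : ((s*t)*ivS (s'*t'))*(s*(t*ivS t)*ivS s) = (s*t)*ivS (s'*t') :=
    (aux_idem_comm hS hg (aux_idem_conj hS (aux_idem_mul_iv hS t) s)).trans l_stt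
  have hGs't't' : ((s*t)*ivS (s'*t'))*(s'*(t'*ivS t')*ivS s') = (s*t)*ivS (s'*t') :=
    (aux_idem_comm hS hg (aux_idem_conj hS (aux_idem_mul_iv hS t') s')).trans l_s't't'
  -- main claims
  have cA := claim_aux ivS ivA hS hA hCl Λ hSieb (s*ivS s') (t*ivS t')
    ((s*t)*ivS (s'*t')) s t he hc hg habs hGe hGss hGsfs hGstt
  have cB := claim_aux ivS ivA hS hA hCl Λ hSieb (s*ivS s') (t*ivS t')
    ((s*t)*ivS (s'*t')) s' t' he hc hg habs' hGe hGs's' hGs'fs' hGs't't'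
  calc Λ.α (s*t*ivS (s'*t')) * Λ.tf s t
      = Λ.α ((s*t)*ivS (s'*t')) * Λ.tf ((s*ivS s')*s) ((t*ivS t')*t) := cA
    _ = Λ.α ((s*t)*ivS (s'*t')) * Λ.tf ((s*ivS s')*s') ((t*ivS t')*t') := by
        rw [hes, hct]
    _ = Λ.α (s*t*ivS (s'*t')) * Λ.tf s' t' := cB.symm
end
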